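/- arXiv:1406.5439 — 5 statements merged into one kernel-verified Lean document; each statement's English description precedes it below -/
import Mathlib

section
/- Let ℋ be a real Hilbert space, let μ > 0 and c > 0, let B : ℋ → ℋ be μ-cocoercive, and let V be a bounded self-adjoint positive operator on ℋ with ‖V‖ ≤ c. Then the operator V^{1/2} ∘ B ∘ V^{1/2} is (μ/c)-cocoercive. Consequently, if (V_n)_{n∈ℕ} is a sequence of bounded self-adjoint positive operators with sup_{n∈ℕ} ‖V_n‖ < +∞, then every V_n^{1/2} ∘ B ∘ V_n^{1/2} is β-cocoercive with β = μ (sup_{n∈ℕ} ‖V_n‖)^{-1}. -/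
open scoped RealInnerProductSpace

lemma aux_cocoercive
    {H : Type*} [NormedAddCommGroup H] [InnerProductSpace ℝ H]
    (μ c : ℝ) (hμ : 0 < μ) (hc : 0 < c)
    (B : H → H)
    (hB : ∀ x y : H, μ * ‖B x - B y‖ ^ 2 ≤ ⟪x - y, B x - B y⟫)
    (V R : H →L[ℝ] H)
    (hVnorm : ‖V‖ ≤ c)
    (hRsa : ∀ x y : H, ⟪R x, y⟫ = ⟪x, R y⟫) (hRR : R.comp R = V)
    (x y : H) :
    μ / c * ‖R (B (R x)) - R (B (R y))‖ ^ 2 ≤ ⟪x - y, R (B (R x)) - R (B (R y))⟫ := by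
  set u := B (R x) - B (R y) with hu
  have key : R (B (R x)) - R (B (R y)) = R u := by simp [hu, map_sub]
  have hVu : R (R u) = V u := by rw [← hRR]; rfl
  have hRu : ‖R u‖ ^ 2 ≤ c * ‖u‖ ^ 2 := by
    have h1 : (‖R u‖ : ℝ) ^ 2 = ⟪R (R u), u⟫ := by
      rw [hRsa]; rw [real_inner_self_eq_norm_sq]
    have h2 : ⟪V u, u⟫ ≤ ‖V u‖ * ‖u‖ := real_inner_le_norm _ _
    have h3 : ‖V u‖ * ‖u‖ ≤ (‖V‖ * ‖u‖) * ‖u‖ :=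
      mul_le_mul_of_nonneg_right (V.le_opNorm u) (norm_nonneg u)
    have h4 : (‖V‖ * ‖u‖) * ‖u‖ ≤ c * ‖u‖ ^ 2 := by
      have := mul_le_mul_of_nonneg_right (mul_le_mul_of_nonneg_right hVnorm (norm_nonneg u)) (norm_nonneg u)
      nlinarith [this]
    rw [h1, hVu]; linarith
  have hmain : μ * ‖u‖ ^ 2 ≤ ⟪R x - R y, u⟫ := hB (R x) (R y)
  have hinner : ⟪x - y, R u⟫ = ⟪R x - R y, u⟫ := by
    rw [← hRsa, map_sub]
  rw [key, hinner]
  calc μ / c * ‖R u‖ ^ 2 ≤ μ / c * (c * ‖u‖ ^ 2) := by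
        apply mul_le_mul_of_nonneg_left hRu (by positivity)
    _ = μ * ‖u‖ ^ 2 := by field_simp
    _ ≤ ⟪R x - R y, u⟫ := hmain

/-- If `B` is μ-cocoercive and `V` is a bounded self-adjoint positive operator
with `‖V‖ ≤ c`, then `V^{1/2} ∘ B ∘ V^{1/2}` is (μ/c)-cocoercive (here `R` plays the role of
`V^{1/2}`).  Consequently, for a sequence `(V n)` of bounded self-adjoint positive operators whose
norms are bounded above, every `Vₙ^{1/2} ∘ B ∘ Vₙ^{1/2}` is β-cocoercive with
`β = μ (⨆ n, ‖V n‖)⁻¹`. -/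
theorem statement1
    {H : Type*} [NormedAddCommGroup H] [InnerProductSpace ℝ H]
    (μ c : ℝ) (hμ : 0 < μ) (hc : 0 < c)
    (B : H → H)
    (hB : ∀ x y : H, μ * ‖B x - B y‖ ^ 2 ≤ ⟪x - y, B x - B y⟫) :
    -- first part
    ((∀ (V R : H →L[ℝ] H),
        (∀ x y : H, ⟪V x, y⟫ = ⟪x, V y⟫) → (∀ x : H, 0 ≤ ⟪V x, x⟫) → ‖V‖ ≤ c →
        (∀ x y : H, ⟪R x, y⟫ = ⟪x, R y⟫) → (∀ x : H, 0 ≤ ⟪R x, x⟫) → R.comp R = V →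
        ∀ x y : H,
          μ / c * ‖R (B (R x)) - R (B (R y))‖ ^ 2 ≤ ⟪x - y, R (B (R x)) - R (B (R y))⟫)) ∧
    -- consequence
    (∀ (V R : ℕ → H →L[ℝ] H),
      (∀ n, ∀ x y : H, ⟪V n x, y⟫ = ⟪x, V n y⟫) → (∀ n, ∀ x : H, 0 ≤ ⟪V n x, x⟫) →
      (∀ n, ∀ x y : H, ⟪R n x, y⟫ = ⟪x, R n y⟫) → (∀ n, ∀ x : H, 0 ≤ ⟪R n x, x⟫) →
      (∀ n, (R n).comp (R n) = V n) →
      BddAbove (Set.range fun n => ‖V n‖) →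
      ∀ n, ∀ x y : H,
        μ * (⨆ k, ‖V k‖)⁻¹ * ‖R n (B (R n x)) - R n (B (R n y))‖ ^ 2
          ≤ ⟪x - y, R n (B (R n x)) - R n (B (R n y))⟫) := by
  constructor
  · intro V R _ _ hVnorm hRsa _ hRR x y
    exact aux_cocoercive μ c hμ hc B hB V R hVnorm hRsa hRR x y
  · intro V R hVsa hVpos hRsa hRpos hRR hBdd n x y
    set s : ℝ := ⨆ k, ‖V k‖ with hs
    have hle : ∀ k, ‖V k‖ ≤ s := fun k => le_ciSup hBdd k
    by_cases hspos : 0 < s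
    · have := aux_cocoercive μ s hμ hspos B hB (V n) (R n) (hle n) (hRsa n) (hRR n) x y
      rw [div_eq_mul_inv] at this
      exact this
    · -- s ≤ 0, so ‖V n‖ = 0, V n = 0, R n = 0
      have hs0 : s = 0 := le_antisymm (not_lt.mp hspos) ((norm_nonneg (V 0)).trans (hle 0))
      have hVn0 : ‖V n‖ = 0 := le_antisymm (hs0 ▸ hle n) (norm_nonneg _)
      have hVz : V n = 0 := norm_eq_zero.mp hVn0
      have hRz : ∀ z : H, R n z = 0 := by
        intro z
        have h1 : (‖R n z‖ : ℝ) ^ 2 = ⟪R n (R n z), z⟫ := by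
          rw [hRsa n]; rw [real_inner_self_eq_norm_sq]
        have h2 : R n (R n z) = V n z := by rw [← hRR n]; rfl
        rw [h2, hVz] at h1
        simp at h1
        simpa using h1
      simp [hRz, hs0]
end

section
/- Let ℋ and 𝒢_1,…,𝒢_m be real Hilbert spaces, let z ∈ ℋ, let f ∈ Γ₀(ℋ), and for every i ∈ {1,…,m} let r_i ∈ 𝒢_i, g_i ∈ Γ₀(𝒢_i), and L_i : ℋ → 𝒢_i be a bounded linear operator. Let 𝒦 = ℋ ⊕ 𝒢_1 ⊕ ⋯ ⊕ 𝒢_m and define the set-valued operator A : 𝒦 → 2^𝒦 by A(x, v_1,…,v_m) = ( ∂f(x) − z + Σ_{i=1}^m L_i^* v_i ) × ( −L_1 x + ∂g_1^*(v_1) + r_1 ) × ⋯ × ( −L_m x + ∂g_m^*(v_m) + r_m ). Then A is maximally monotone. -/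
/-!
On `𝒦 = ℋ ⊕ 𝒢₁ ⊕ ⋯ ⊕ 𝒢ₘ` the operator is `A = B + S - (z, -r)` with `B = ∂f × ∏ᵢ ∂gᵢ*` and
`S (x, v) = (Σᵢ Lᵢ* vᵢ, (-Lᵢ x)ᵢ)`, a bounded linear operator with `⟪k, S k⟫ = 0`. Since `f` and
the `gᵢ*` lie in `Γ₀`, `B` is monotone and has everywhere defined resolvents: the proximal point
of `x` minimises `F + ‖· - x‖² / (2γ)`, which is bounded below thanks to an affine minorant of `F`
(Hahn–Banach on its closed epigraph) and strongly convex, so minimising sequences are Cauchy.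
Hence `A` is monotone, and for `γ = 1 / (1 + ‖S‖²)` the forward–backward map
`k ↦ J_γ (k + γ (w - k - S k))` is a contraction whose fixed point `q` solves `w ∈ q + A q`.
Surjectivity of `I + A` forces every monotone extension of `A` to coincide with `A`.
-/

open scoped RealInnerProductSpace

noncomputable section

variable {E : Type*} [NormedAddCommGroup E] [InnerProductSpace ℝ E]

/-- The class Γ₀ : proper, lower semicontinuous, convex functions with values in ]-∞,+∞]. -/
def Gamma0 (f : E → EReal) : Prop :=
  (∃ x, f x ≠ ⊤) ∧ (∀ x, f x ≠ ⊥) ∧ LowerSemicontinuous f ∧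
    ∀ x y : E, ∀ t : ℝ, 0 ≤ t → t ≤ 1 →
      f (t • x + (1 - t) • y) ≤ (t : EReal) * f x + ((1 - t : ℝ) : EReal) * f y

/-- The subdifferential of `f` at `x`. -/
def subdiff (f : E → EReal) (x : E) : Set E :=
  {u | ∀ y, ((⟪y - x, u⟫ : ℝ) : EReal) + f x ≤ f y}

/-- The Fenchel conjugate of `f`. -/
def conj (f : E → EReal) (u : E) : EReal := ⨆ x, ((⟪x, u⟫ : ℝ) : EReal) - f x

lemma norm_convexComb_sq (u v : E) (θ : ℝ) :
    ‖θ • u + (1 - θ) • v‖ ^ 2 = θ * ‖u‖ ^ 2 + (1 - θ) * ‖v‖ ^ 2 - θ * (1 - θ) * ‖u - v‖ ^ 2 := by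
  rw [norm_add_sq_real, norm_sub_sq_real, norm_smul, norm_smul, real_inner_smul_left,
    real_inner_smul_right, mul_pow, mul_pow, Real.norm_eq_abs, Real.norm_eq_abs, sq_abs, sq_abs]
  ring

lemma le_of_forall_le_add_mul {a b K : ℝ} (h : ∀ t ∈ Set.Ioo (0 : ℝ) 1, a ≤ b + t * K) :
    a ≤ b := by
  have hlim : Filter.Tendsto (fun t => b + t * K) (nhdsWithin 0 (Set.Ioi 0)) (nhds b) := by
    have : Continuous fun t : ℝ => b + t * K := by fun_prop
    simpa using (this.tendsto 0).mono_left nhdsWithin_le_nhds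
  exact ge_of_tendsto hlim (Filter.eventually_of_mem (Ioo_mem_nhdsGT one_pos) h)

lemma norm_sub_smul_apply_sq_le (S : E →L[ℝ] E) (hS : ∀ d, 0 ≤ ⟪d, S d⟫) {γ : ℝ}
    (hγ₀ : 0 ≤ γ) (hγ₁ : γ ≤ 1) (d : E) :
    ‖(1 - γ) • d - γ • S d‖ ^ 2 ≤ ((1 - γ) ^ 2 + γ ^ 2 * ‖S‖ ^ 2) * ‖d‖ ^ 2 := by
  rw [norm_sub_sq_real, norm_smul, norm_smul, real_inner_smul_left, real_inner_smul_right,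
    mul_pow, mul_pow, Real.norm_eq_abs, Real.norm_eq_abs, sq_abs, sq_abs]
  have hSd : ‖S d‖ ^ 2 ≤ ‖S‖ ^ 2 * ‖d‖ ^ 2 := by
    rw [← mul_pow]
    exact pow_le_pow_left₀ (norm_nonneg _) (S.le_opNorm d) 2
  nlinarith [hS d, mul_nonneg hγ₀ (sub_nonneg.2 hγ₁), sq_nonneg γ]

def IsMonotoneOp (A : E → Set E) : Prop :=
  ∀ p q u v, u ∈ A p → v ∈ A q → 0 ≤ ⟪p - q, u - v⟫

def IsMaximalMonotoneOp (A : E → Set E) : Prop :=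
  IsMonotoneOp A ∧ ∀ A' : E → Set E, IsMonotoneOp A' → (∀ p, A p ⊆ A' p) → A = A'

lemma EReal.exists_eq_coe_of_ne_top_of_ne_bot {a : EReal} (ha : a ≠ ⊤) (ha' : a ≠ ⊥) :
    ∃ r : ℝ, a = r :=
  ⟨_, (EReal.coe_toReal ha ha').symm⟩

section Subdifferential

variable {F : E → EReal}

lemma ne_top_of_mem_subdiff (hF : ∃ x, F x ≠ ⊤) {x u : E} (hu : u ∈ subdiff F x) : F x ≠ ⊤ := by
  obtain ⟨y, hy⟩ := hF
  intro hx
  exact hy (by simpa [hx] using hu y)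

lemma isMonotoneOp_subdiff (hF : ∃ x, F x ≠ ⊤) (hF' : ∀ x, F x ≠ ⊥) :
    IsMonotoneOp (subdiff F) := by
  intro x y a b ha hb
  obtain ⟨α, hα⟩ := EReal.exists_eq_coe_of_ne_top_of_ne_bot (ne_top_of_mem_subdiff hF ha) (hF' x)
  obtain ⟨β, hβ⟩ := EReal.exists_eq_coe_of_ne_top_of_ne_bot (ne_top_of_mem_subdiff hF hb) (hF' y)
  have hay := ha y
  have hbx := hb x
  rw [hα, hβ, ← EReal.coe_add, EReal.coe_le_coe_iff] at hay hbx
  have : ⟪y - x, a⟫ = -⟪x - y, a⟫ := by rw [← neg_sub, inner_neg_left]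
  rw [inner_sub_right]
  linarith

end Subdifferential

namespace Gamma0

variable {F : E → EReal}

lemma exists_eq_coe (hF : Gamma0 F) {y : E} (hy : F y ≠ ⊤) : ∃ α : ℝ, F y = α :=
  EReal.exists_eq_coe_of_ne_top_of_ne_bot hy (hF.2.1 y)

lemma apply_convexComb_le (hF : Gamma0 F) {a b : E} {s t θ : ℝ} (ha : F a ≤ s) (hb : F b ≤ t)
    (hθ₀ : 0 ≤ θ) (hθ₁ : θ ≤ 1) :
    F (θ • a + (1 - θ) • b) ≤ ((θ * s + (1 - θ) * t : ℝ) : EReal) := by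
  calc F (θ • a + (1 - θ) • b) ≤ (θ : EReal) * F a + ((1 - θ : ℝ) : EReal) * F b :=
        hF.2.2.2 a b θ hθ₀ hθ₁
    _ ≤ (θ : EReal) * s + ((1 - θ : ℝ) : EReal) * t := by
        gcongr
    _ = ((θ * s + (1 - θ) * t : ℝ) : EReal) := by norm_cast

lemma exists_affine_minorant [CompleteSpace E] (hF : Gamma0 F) :
    ∃ (u : E) (b : ℝ), ∀ x, ((⟪x, u⟫ + b : ℝ) : EReal) ≤ F x := by
  set epi : Set (E × ℝ) := {p | F p.1 ≤ p.2}
  have epi_convex : Convex ℝ epi := by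
    rintro ⟨x, s⟩ hxs ⟨y, t⟩ hyt a b ha hb hab
    obtain rfl : b = 1 - a := by linarith
    exact hF.apply_convexComb_le hxs hyt ha (by linarith)
  have epi_closed : IsClosed epi := hF.2.2.1.isClosed_epigraph.preimage
    (continuous_fst.prodMk (continuous_coe_real_ereal.comp continuous_snd))
  obtain ⟨x₀, hx₀⟩ := hF.1
  obtain ⟨α, hα⟩ := hF.exists_eq_coe hx₀
  obtain ⟨φ, c, hφ_lt, hφ_gt⟩ := geometric_hahn_banach_point_closed epi_convex epi_closed
    (x := (x₀, α - 1))
    (by simp only [epi, Set.mem_ofPred_eq, hα, not_le]; exact_mod_cast sub_one_lt α)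
  set v := (InnerProductSpace.toDual ℝ E).symm (φ.comp (.inl ℝ E ℝ))
  set a := φ (0, 1)
  have hφ : ∀ x t, φ (x, t) = ⟪x, v⟫ + t * a := by
    intro x t
    rw [real_inner_comm, InnerProductSpace.toDual_symm_apply, ← smul_eq_mul, ← map_smul,
      ContinuousLinearMap.comp_apply, ← map_add]
    simp
  have ha : 0 < a := by
    have h₁ := hφ_gt (x₀, α) (by simp [epi, hα])
    rw [hφ] at hφ_lt h₁
    nlinarith
  refine ⟨-(a⁻¹ • v), c / a, fun x => ?_⟩
  by_cases hx : F x = ⊤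
  · simp [hx]
  obtain ⟨β, hβ⟩ := hF.exists_eq_coe hx
  have h₁ := hφ_gt (x, β) (by simp [epi, hβ])
  rw [hφ] at h₁
  rw [hβ, EReal.coe_le_coe_iff, inner_neg_right, real_inner_smul_right,
    show -(a⁻¹ * ⟪x, v⟫) + c / a = (c - ⟪x, v⟫) / a by ring, div_le_iff₀ ha]
  linarith

end Gamma0

section Conjugate

variable {g : E → EReal}

lemma le_conj (x u : E) : ((⟪x, u⟫ : ℝ) : EReal) - g x ≤ conj g u :=
  le_iSup (fun x => ((⟪x, u⟫ : ℝ) : EReal) - g x) x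

lemma conj_ne_bot (hg : ∃ x, g x ≠ ⊤) (u : E) : conj g u ≠ ⊥ := by
  obtain ⟨x, hx⟩ := hg
  refine ne_bot_of_le_ne_bot ?_ (le_conj x u)
  rw [sub_eq_add_neg]
  exact EReal.add_ne_bot_iff.2 ⟨EReal.coe_ne_bot _, by simpa using hx⟩

lemma lowerSemicontinuous_conj (hg : ∀ x, g x ≠ ⊥) : LowerSemicontinuous (conj g) := by
  refine lowerSemicontinuous_iSup fun x => ?_
  by_cases hx : g x = ⊤
  · simpa [hx] using lowerSemicontinuous_const
  obtain ⟨γ, hγ⟩ := EReal.exists_eq_coe_of_ne_top_of_ne_bot hx (hg x)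
  simp only [hγ, ← EReal.coe_sub]
  exact (continuous_coe_real_ereal.comp
    ((continuous_const.inner continuous_id).sub continuous_const)).lowerSemicontinuous

lemma gamma0_conj [CompleteSpace E] (hg : Gamma0 g) : Gamma0 (conj g) := by
  refine ⟨?_, conj_ne_bot hg.1, lowerSemicontinuous_conj hg.2.1, fun u w θ hθ₀ hθ₁ => ?_⟩
  · obtain ⟨u, b, hub⟩ := hg.exists_affine_minorant
    refine ⟨u, ne_top_of_le_ne_top (EReal.coe_ne_top (-b)) (iSup_le fun x => ?_)⟩
    calc ((⟪x, u⟫ : ℝ) : EReal) - g x ≤ ((⟪x, u⟫ : ℝ) : EReal) - ((⟪x, u⟫ + b : ℝ) : EReal) :=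
          EReal.sub_le_sub le_rfl (hub x)
      _ = ((-b : ℝ) : EReal) := by rw [← EReal.coe_sub]; ring_nf
  refine iSup_le fun x => ?_
  by_cases hx : g x = ⊤
  · simp [hx]
  obtain ⟨γ, hγ⟩ := hg.exists_eq_coe hx
  calc ((⟪x, θ • u + (1 - θ) • w⟫ : ℝ) : EReal) - g x
      = (θ : EReal) * ((⟪x, u⟫ - γ : ℝ) : EReal)
          + ((1 - θ : ℝ) : EReal) * ((⟪x, w⟫ - γ : ℝ) : EReal) := by
        rw [hγ, inner_add_right, real_inner_smul_right, real_inner_smul_right]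
        norm_cast
        ring
    _ ≤ (θ : EReal) * conj g u + ((1 - θ : ℝ) : EReal) * conj g w := by
        have hu := le_conj (g := g) x u
        have hw := le_conj (g := g) x w
        rw [hγ, ← EReal.coe_sub] at hu hw
        gcongr

end Conjugate

/-- The function minimised by the proximal point `prox_{γF} x`. -/
def proxObjective (F : E → EReal) (γ : ℝ) (x y : E) : EReal :=
  F y + (((2 * γ)⁻¹ * ‖y - x‖ ^ 2 : ℝ) : EReal)

namespace Gamma0

variable {F : E → EReal} {γ : ℝ} {x : E}

lemma exists_coe_le_proxObjective [CompleteSpace E] (hF : Gamma0 F) (hγ : 0 < γ) :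
    ∃ c : ℝ, ∀ y, (c : EReal) ≤ proxObjective F γ x y := by
  obtain ⟨u, b, hub⟩ := hF.exists_affine_minorant
  refine ⟨b + ⟪x, u⟫ - γ / 2 * ‖u‖ ^ 2, fun y => ?_⟩
  have hsq : 0 ≤ ‖(y - x) + γ • u‖ ^ 2 := sq_nonneg _
  rw [norm_add_sq_real, norm_smul, real_inner_smul_right, mul_pow, Real.norm_eq_abs, sq_abs,
    inner_sub_left] at hsq
  calc ((b + ⟪x, u⟫ - γ / 2 * ‖u‖ ^ 2 : ℝ) : EReal)
      ≤ ((⟪y, u⟫ + b : ℝ) : EReal) + (((2 * γ)⁻¹ * ‖y - x‖ ^ 2 : ℝ) : EReal) := by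
        rw [← EReal.coe_add, EReal.coe_le_coe_iff]
        have h2γ : (2 * γ)⁻¹ * (2 * γ) = 1 := inv_mul_cancel₀ (by positivity)
        nlinarith [mul_le_mul_of_nonneg_left hsq (inv_nonneg.2 (by positivity : (0 : ℝ) ≤ 2 * γ))]
    _ ≤ proxObjective F γ x y := by unfold proxObjective; gcongr; exact hub y

lemma proxObjective_convexComb_le (hF : Gamma0 F) {a b : E} {s t θ : ℝ}
    (ha : proxObjective F γ x a ≤ s) (hb : proxObjective F γ x b ≤ t) (hθ₀ : 0 ≤ θ) (hθ₁ : θ ≤ 1) :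
    proxObjective F γ x (θ • a + (1 - θ) • b)
      ≤ ((θ * s + (1 - θ) * t - θ * (1 - θ) * ((2 * γ)⁻¹ * ‖a - b‖ ^ 2) : ℝ) : EReal) := by
  have hFa : F a ≤ ((s - (2 * γ)⁻¹ * ‖a - x‖ ^ 2 : ℝ) : EReal) := by
    rw [EReal.coe_sub]
    exact EReal.le_sub_iff_add_le (.inl (EReal.coe_ne_bot _)) (.inl (EReal.coe_ne_top _)) |>.2 ha
  have hFb : F b ≤ ((t - (2 * γ)⁻¹ * ‖b - x‖ ^ 2 : ℝ) : EReal) := by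
    rw [EReal.coe_sub]
    exact EReal.le_sub_iff_add_le (.inl (EReal.coe_ne_bot _)) (.inl (EReal.coe_ne_top _)) |>.2 hb
  have hq : θ • a + (1 - θ) • b - x = θ • (a - x) + (1 - θ) • (b - x) := by module
  calc proxObjective F γ x (θ • a + (1 - θ) • b)
      ≤ ((θ * (s - (2 * γ)⁻¹ * ‖a - x‖ ^ 2) + (1 - θ) * (t - (2 * γ)⁻¹ * ‖b - x‖ ^ 2) : ℝ) : EReal)
        + (((2 * γ)⁻¹ * ‖θ • a + (1 - θ) • b - x‖ ^ 2 : ℝ) : EReal) := by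
        unfold proxObjective
        gcongr
        exact hF.apply_convexComb_le hFa hFb hθ₀ hθ₁
    _ = _ := by
        rw [← EReal.coe_add, EReal.coe_eq_coe_iff, hq, norm_convexComb_sq,
          show a - x - (b - x) = a - b by abel]
        ring

lemma lowerSemicontinuous_proxObjective (hF : Gamma0 F) :
    LowerSemicontinuous (proxObjective F γ x) := by
  refine hF.2.2.1.add' (continuous_coe_real_ereal.comp (by fun_prop)).lowerSemicontinuous
    fun y => EReal.continuousAt_add (.inr (EReal.coe_ne_bot _)) (.inr (EReal.coe_ne_top _))

lemma cauchySeq_of_proxObjective_le (hF : Gamma0 F) (hγ : 0 < γ) {μ : ℝ}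
    (hμ : ∀ y, (μ : EReal) ≤ proxObjective F γ x y) {y : ℕ → E}
    (hy : ∀ n, proxObjective F γ x (y n) ≤ ((μ + 1 / (n + 1) : ℝ) : EReal)) : CauchySeq y := by
  have hdist : ∀ n k, ‖y n - y k‖ ^ 2 ≤ 4 * γ * (1 / (n + 1) + 1 / (k + 1)) := by
    intro n k
    have hmid := (hμ _).trans
      (hF.proxObjective_convexComb_le (hy n) (hy k) (by norm_num : (0 : ℝ) ≤ 1 / 2) (by norm_num))
    rw [EReal.coe_le_coe_iff] at hmid
    have h2γ : (2 * γ)⁻¹ * (2 * γ) = 1 := inv_mul_cancel₀ (by positivity)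
    nlinarith [mul_le_mul_of_nonneg_left hmid (by positivity : (0 : ℝ) ≤ 2 * γ)]
  refine cauchySeq_of_le_tendsto_0 (fun N : ℕ => √(8 * γ * (1 / (N + 1))))
    (fun n k N hn hk => ?_) ?_
  · rw [dist_eq_norm, ← Real.sqrt_sq (norm_nonneg _)]
    gcongr
    refine (hdist n k).trans ?_
    have hn' : 1 / ((n : ℝ) + 1) ≤ 1 / (N + 1) := by gcongr
    have hk' : 1 / ((k : ℝ) + 1) ≤ 1 / (N + 1) := by gcongr
    nlinarith
  · have h := tendsto_one_div_add_atTop_nhds_zero_nat.const_mul (8 * γ)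
    rw [mul_zero] at h
    simpa [Function.comp_def] using (Real.continuous_sqrt.tendsto 0).comp h

lemma exists_isMin_proxObjective [CompleteSpace E] (hF : Gamma0 F) (hγ : 0 < γ) (x : E) :
    ∃ p, ∀ y, proxObjective F γ x p ≤ proxObjective F γ x y := by
  obtain ⟨c, hc⟩ := hF.exists_coe_le_proxObjective (x := x) hγ
  set m := ⨅ y, proxObjective F γ x y
  have hm_top : m ≠ ⊤ := by
    obtain ⟨x₀, hx₀⟩ := hF.1
    refine ne_top_of_le_ne_top ?_ (iInf_le _ x₀)
    obtain ⟨α, hα⟩ := hF.exists_eq_coe hx₀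
    rw [proxObjective, hα, ← EReal.coe_add]
    exact EReal.coe_ne_top _
  obtain ⟨μ, hμ⟩ := EReal.exists_eq_coe_of_ne_top_of_ne_bot hm_top
    (ne_bot_of_le_ne_bot (EReal.coe_ne_bot c) (le_iInf hc))
  have hseq : ∀ n : ℕ, ∃ y, proxObjective F γ x y ≤ ((μ + 1 / (n + 1) : ℝ) : EReal) := by
    intro n
    have hε : (0 : ℝ) < 1 / (n + 1) := by positivity
    obtain ⟨y, hy⟩ := iInf_lt_iff.1
      (hμ.trans_lt (EReal.coe_lt_coe_iff.2 (lt_add_of_pos_right μ hε)))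
    exact ⟨y, hy.le⟩
  choose y hy using hseq
  have hμ_le : ∀ y, (μ : EReal) ≤ proxObjective F γ x y := fun y => hμ ▸ iInf_le _ y
  obtain ⟨p, hp⟩ := cauchySeq_tendsto_of_complete (hF.cauchySeq_of_proxObjective_le hγ hμ_le hy)
  have hp_le : ∀ N : ℕ, proxObjective F γ x p ≤ ((μ + 1 / (N + 1) : ℝ) : EReal) := by
    intro N
    refine (hF.lowerSemicontinuous_proxObjective.isClosed_preimage _).mem_of_tendsto hp
      (Filter.eventually_atTop.2 ⟨N, fun n hn => (hy n).trans ?_⟩)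
    rw [EReal.coe_le_coe_iff]
    gcongr
  refine ⟨p, fun z => le_trans ?_ (hμ_le z)⟩
  have hlim : Filter.Tendsto (fun N : ℕ => μ + 1 / ((N : ℝ) + 1)) Filter.atTop (nhds μ) := by
    simpa using (tendsto_const_nhds (x := μ)).add (tendsto_one_div_add_atTop_nhds_zero_nat (𝕜 := ℝ))
  exact ge_of_tendsto' ((continuous_coe_real_ereal.tendsto μ).comp hlim) hp_le

lemma mem_subdiff_of_isMin_proxObjective (hF : Gamma0 F) (hγ : 0 < γ) {p : E}
    (hp : ∀ y, proxObjective F γ x p ≤ proxObjective F γ x y) : γ⁻¹ • (x - p) ∈ subdiff F p := by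
  set q : E → ℝ := fun y => (2 * γ)⁻¹ * ‖y - x‖ ^ 2
  have hψ : ∀ y (a : ℝ), F y = a → proxObjective F γ x y = ((a + q y : ℝ) : EReal) :=
    fun y a h => by rw [proxObjective, h, EReal.coe_add]
  have hp_top : F p ≠ ⊤ := by
    intro h
    obtain ⟨x₀, hx₀⟩ := hF.1
    obtain ⟨α₀, hα₀⟩ := hF.exists_eq_coe hx₀
    have h₀ := hp x₀
    rw [hψ x₀ α₀ hα₀, proxObjective, h, EReal.top_add_coe] at h₀
    exact EReal.coe_ne_top _ (top_le_iff.1 h₀)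
  obtain ⟨α, hα⟩ := hF.exists_eq_coe hp_top
  intro w
  by_cases hw : F w = ⊤
  · simp [hw]
  obtain ⟨β, hβ⟩ := hF.exists_eq_coe hw
  set K := (2 * γ)⁻¹ * ‖w - p‖ ^ 2
  -- quadratic growth at the minimiser, from strong convexity along the segment `[p, w]`
  have hgrowth : α + q p + K ≤ β + q w := by
    refine le_of_forall_le_add_mul (K := K) fun t ⟨ht₀, ht₁⟩ => ?_
    have h := (hp _).trans (hF.proxObjective_convexComb_le (hψ w β hβ).le (hψ p α hα).le
      ht₀.le ht₁.le)
    rw [hψ p α hα, EReal.coe_le_coe_iff] at h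
    nlinarith
  have hexpand : ‖w - x‖ ^ 2 = ‖w - p‖ ^ 2 + 2 * ⟪w - p, p - x⟫ + ‖p - x‖ ^ 2 := by
    rw [← norm_add_sq_real, sub_add_sub_cancel]
  rw [hα, hβ, ← EReal.coe_add, EReal.coe_le_coe_iff, real_inner_smul_right,
    show x - p = -(p - x) by abel, inner_neg_right]
  have h2γ : (2 * γ)⁻¹ * 2 = γ⁻¹ := by field_simp
  simp only [q, K, hexpand] at hgrowth
  nlinarith

lemma exists_resolvent [CompleteSpace E] (hF : Gamma0 F) (hγ : 0 < γ) (x : E) :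
    ∃ p, γ⁻¹ • (x - p) ∈ subdiff F p :=
  (hF.exists_isMin_proxObjective hγ x).imp fun _ => hF.mem_subdiff_of_isMin_proxObjective hγ

end Gamma0

namespace IsMonotoneOp

variable {B : E → Set E}

lemma lipschitzWith_one_of_resolvent (hB : IsMonotoneOp B) {γ : ℝ} (hγ : 0 < γ) {J : E → E}
    (hJ : ∀ x, γ⁻¹ • (x - J x) ∈ B (J x)) : LipschitzWith 1 J := by
  refine LipschitzWith.of_dist_le_mul fun a b => ?_
  rw [NNReal.coe_one, one_mul, dist_eq_norm, dist_eq_norm]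
  have h := hB _ _ _ _ (hJ a) (hJ b)
  rw [← smul_sub, real_inner_smul_right,
    show a - J a - (b - J b) = (a - b) - (J a - J b) by abel, inner_sub_right,
    real_inner_self_eq_norm_sq] at h
  -- firm nonexpansiveness: `‖J a - J b‖² ≤ ⟪J a - J b, a - b⟫`
  have hfirm : ‖J a - J b‖ ^ 2 ≤ ‖J a - J b‖ * ‖a - b‖ :=
    (le_of_sub_nonneg (nonneg_of_mul_nonneg_right h (inv_pos.2 hγ))).trans (real_inner_le_norm _ _)
  nlinarith [norm_nonneg (J a - J b), norm_nonneg (a - b)]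

lemma eq_of_le_of_forall_exists_sub_mem {A A' : E → Set E} (hA' : IsMonotoneOp A')
    (hle : ∀ p, A p ⊆ A' p) (hsurj : ∀ w, ∃ q, w - q ∈ A q) : A = A' := by
  funext p
  refine (hle p).antisymm fun u hu => ?_
  obtain ⟨q, hq⟩ := hsurj (p + u)
  have h := hA' p q u _ hu (hle q hq)
  rw [show u - (p + u - q) = -(p - q) by abel, inner_neg_right, real_inner_self_eq_norm_sq,
    neg_nonneg] at h
  obtain rfl : p = q := sub_eq_zero.1 (norm_eq_zero.1 (pow_eq_zero_iff two_ne_zero |>.1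
    (le_antisymm h (sq_nonneg _))))
  simpa using hq

lemma exists_sub_sub_mem [CompleteSpace E] (hB : IsMonotoneOp B)
    (hres : ∀ γ : ℝ, 0 < γ → ∀ x, ∃ p, γ⁻¹ • (x - p) ∈ B p)
    (S : E →L[ℝ] E) (hS : ∀ d, 0 ≤ ⟪d, S d⟫)
    (w : E) : ∃ q, w - q - S q ∈ B q := by
  set γ := (1 + ‖S‖ ^ 2)⁻¹
  have hγ₀ : 0 < γ := by positivity
  have hγ₁ : γ ≤ 1 := inv_le_one_of_one_le₀ (by nlinarith [norm_nonneg S])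
  choose J hJ using hres γ hγ₀
  set T := fun k => J (k + γ • (w - k - S k))
  -- with this `γ`, the forward step has Lipschitz constant `√(1 - γ) ≤ 1 - γ / 2`
  have hT : ∀ k k', dist (T k) (T k') ≤ (1 - γ / 2) * dist k k' := by
    intro k k'
    refine ((hB.lipschitzWith_one_of_resolvent hγ₀ hJ).dist_le_mul _ _).trans ?_
    rw [NNReal.coe_one, one_mul, dist_eq_norm, dist_eq_norm,
      show k + γ • (w - k - S k) - (k' + γ • (w - k' - S k'))
        = (1 - γ) • (k - k') - γ • S (k - k') by rw [map_sub]; module]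
    refine le_of_pow_le_pow_left₀ two_ne_zero (by nlinarith [norm_nonneg (k - k')]) ?_
    have hcoef : (1 - γ) ^ 2 + γ ^ 2 * ‖S‖ ^ 2 = 1 - γ := by
      have : γ * (1 + ‖S‖ ^ 2) = 1 := inv_mul_cancel₀ (by positivity)
      linear_combination γ * this
    refine (norm_sub_smul_apply_sq_le S hS hγ₀.le hγ₁ _).trans ?_
    rw [hcoef, mul_pow]
    gcongr
    nlinarith
  have hTc : ContractingWith (1 - γ / 2).toNNReal T :=
    ⟨by rw [Real.toNNReal_lt_one]; linarith,
      .of_dist_le_mul fun k k' => by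
        rw [Real.coe_toNNReal _ (by linarith)]; exact hT k k'⟩
  set q := ContractingWith.fixedPoint T hTc
  have hq : J (q + γ • (w - q - S q)) = q := hTc.fixedPoint_isFixedPt
  refine ⟨q, ?_⟩
  simpa [hq, smul_smul, hγ₀.ne'] using hJ (q + γ • (w - q - S q))

lemma isMaximalMonotoneOp_add_linear [CompleteSpace E] (hB : IsMonotoneOp B)
    (hres : ∀ γ : ℝ, 0 < γ → ∀ x, ∃ p, γ⁻¹ • (x - p) ∈ B p)
    (S : E →L[ℝ] E) (hS : ∀ d, 0 ≤ ⟪d, S d⟫)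
    (c : E) : IsMaximalMonotoneOp fun k => {u | u - S k + c ∈ B k} := by
  have hmono : IsMonotoneOp fun k => {u | u - S k + c ∈ B k} := by
    intro p q u v hu hv
    have h := hB _ _ _ _ hu hv
    rw [show u - S p + c - (v - S q + c) = (u - v) - S (p - q) by rw [map_sub]; abel,
      inner_sub_right] at h
    linarith [hS (p - q)]
  refine ⟨hmono, fun A' hA' hle => hA'.eq_of_le_of_forall_exists_sub_mem hle fun w => ?_⟩
  obtain ⟨q, hq⟩ := hB.exists_sub_sub_mem hres S hS (w + c)
  exact ⟨q, by simpa [sub_add_eq_add_sub, sub_right_comm] using hq⟩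

end IsMonotoneOp

section HilbertSum

variable {H : Type*} [NormedAddCommGroup H] [InnerProductSpace ℝ H]
  {ι : Type*} {G : ι → Type*} [∀ i, NormedAddCommGroup (G i)] [∀ i, InnerProductSpace ℝ (G i)]

local notation "𝒦" => WithLp 2 (H × PiLp 2 G)

def sumEquiv : 𝒦 ≃L[ℝ] H × ∀ i, G i :=
  (WithLp.prodContinuousLinearEquiv 2 ℝ H (PiLp 2 G)).trans
    ((ContinuousLinearEquiv.refl ℝ H).prodCongr (PiLp.continuousLinearEquiv 2 ℝ G))

lemma eq_of_comap_sumEquiv_eq {A A' : (H × ∀ i, G i) → Set (H × ∀ i, G i)}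
    (h : (fun k : 𝒦 => {u | sumEquiv u ∈ A (sumEquiv k)}) =
      fun k : 𝒦 => {u | sumEquiv u ∈ A' (sumEquiv k)}) : A = A' := by
  funext p
  ext u
  simpa using Set.ext_iff.1 (congrFun h (sumEquiv.symm p)) (sumEquiv.symm u)

def prodOp (B₀ : H → Set H) (B : ∀ i, G i → Set (G i)) : 𝒦 → Set 𝒦 := fun k =>
  {u | (sumEquiv u).1 ∈ B₀ (sumEquiv k).1 ∧ ∀ i, (sumEquiv u).2 i ∈ B i ((sumEquiv k).2 i)}

variable {B₀ : H → Set H} {B : ∀ i, G i → Set (G i)}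

lemma exists_resolvent_prodOp {γ : ℝ} (hB₀ : ∀ x, ∃ p, γ⁻¹ • (x - p) ∈ B₀ p)
    (hB : ∀ i x, ∃ p, γ⁻¹ • (x - p) ∈ B i p) (k : 𝒦) :
    ∃ p, γ⁻¹ • (k - p) ∈ prodOp B₀ B p := by
  obtain ⟨p₀, hp₀⟩ := hB₀ (sumEquiv k).1
  choose p hp using fun i => hB i ((sumEquiv k).2 i)
  exact ⟨sumEquiv.symm (p₀, p), by simpa using hp₀, fun i => by simpa using hp i⟩

variable [Fintype ι]

lemma inner_eq_inner_sumEquiv (k k' : 𝒦) :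
    ⟪k, k'⟫ = ⟪(sumEquiv k).1, (sumEquiv k').1⟫ + ∑ i, ⟪(sumEquiv k).2 i, (sumEquiv k').2 i⟫ :=
  rfl

lemma isMonotoneOp_comap_sumEquiv_iff {A : (H × ∀ i, G i) → Set (H × ∀ i, G i)} :
    IsMonotoneOp (fun k : 𝒦 => {u | sumEquiv u ∈ A (sumEquiv k)}) ↔
      ∀ p q u v : H × ∀ i, G i, u ∈ A p → v ∈ A q →
        0 ≤ ⟪p.1 - q.1, u.1 - v.1⟫ + ∑ i, ⟪p.2 i - q.2 i, u.2 i - v.2 i⟫ := by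
  constructor
  · intro h p q u v hu hv
    have h' := h (sumEquiv.symm p) (sumEquiv.symm q) (sumEquiv.symm u) (sumEquiv.symm v)
      (by simpa using hu) (by simpa using hv)
    rw [inner_eq_inner_sumEquiv] at h'
    simpa only [map_sub, ContinuousLinearEquiv.apply_symm_apply, Prod.fst_sub, Prod.snd_sub,
      Pi.sub_apply] using h'
  · intro h p q u v hu hv
    rw [inner_eq_inner_sumEquiv]
    simpa only [map_sub, Prod.fst_sub, Prod.snd_sub, Pi.sub_apply] using h _ _ _ _ hu hv

lemma isMonotoneOp_prodOp (hB₀ : IsMonotoneOp B₀) (hB : ∀ i, IsMonotoneOp (B i)) :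
    IsMonotoneOp (prodOp B₀ B) := by
  intro p q u v hu hv
  rw [inner_eq_inner_sumEquiv]
  simp only [map_sub, Prod.fst_sub, Prod.snd_sub, Pi.sub_apply]
  exact add_nonneg (hB₀ _ _ _ _ hu.1 hv.1)
    (Finset.sum_nonneg fun i _ => hB i _ _ _ _ (hu.2 i) (hv.2 i))

variable [CompleteSpace H] [∀ i, CompleteSpace (G i)]

/-- `(x, v) ↦ (Σᵢ Lᵢ* vᵢ, (-Lᵢ x)ᵢ)` -/
def skewCoupling (L : ∀ i, H →L[ℝ] G i) : 𝒦 →L[ℝ] 𝒦 :=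
  (sumEquiv (H := H) (G := G)).symm.toContinuousLinearMap ∘L
    ((∑ i, (L i).adjoint ∘L ContinuousLinearMap.proj i ∘L .snd ℝ H (∀ i, G i)).prod
      (.pi fun i => -(L i ∘L .fst ℝ H (∀ i, G i)))) ∘L
    (sumEquiv (H := H) (G := G)).toContinuousLinearMap

lemma sumEquiv_skewCoupling (L : ∀ i, H →L[ℝ] G i) (k : 𝒦) :
    sumEquiv (skewCoupling L k) =
      (∑ i, (L i).adjoint ((sumEquiv k).2 i), fun i => -L i (sumEquiv k).1) := by
  simp [skewCoupling]

lemma inner_skewCoupling_self (L : ∀ i, H →L[ℝ] G i) (k : 𝒦) : ⟪k, skewCoupling L k⟫ = 0 := by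
  rw [inner_eq_inner_sumEquiv, sumEquiv_skewCoupling, inner_sum]
  simp [ContinuousLinearMap.adjoint_inner_right, real_inner_comm]

end HilbertSum

theorem statement4_general
    {H : Type*} [NormedAddCommGroup H] [InnerProductSpace ℝ H] [CompleteSpace H]
    {m : ℕ}
    {G : Fin m → Type*} [∀ i, NormedAddCommGroup (G i)] [∀ i, InnerProductSpace ℝ (G i)]
    [∀ i, CompleteSpace (G i)]
    (z : H) (f : H → EReal) (hf : Gamma0 f)
    (r : ∀ i, G i) (g : ∀ i, G i → EReal) (hg : ∀ i, Gamma0 (g i))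
    (L : ∀ i, H →L[ℝ] G i)
    (A : (H × ∀ i, G i) → Set (H × ∀ i, G i))
    (hA : ∀ p q : H × ∀ i, G i, q ∈ A p ↔
      (q.1 - ∑ i, ContinuousLinearMap.adjoint (L i) (p.2 i) + z ∈ subdiff f p.1) ∧
      ∀ i, q.2 i + L i p.1 - r i ∈ subdiff (conj (g i)) (p.2 i)) :
    -- A is monotone …
    ((∀ p q u v : H × ∀ i, G i, u ∈ A p → v ∈ A q →
        0 ≤ ⟪p.1 - q.1, u.1 - v.1⟫ + ∑ i, ⟪p.2 i - q.2 i, u.2 i - v.2 i⟫)) ∧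
    -- … and maximally monotone
    (∀ A' : (H × ∀ i, G i) → Set (H × ∀ i, G i),
      (∀ p q u v : H × ∀ i, G i, u ∈ A' p → v ∈ A' q →
        0 ≤ ⟪p.1 - q.1, u.1 - v.1⟫ + ∑ i, ⟪p.2 i - q.2 i, u.2 i - v.2 i⟫) →
      (∀ p, A p ⊆ A' p) → A = A') := by
  have hg' := fun i => gamma0_conj (hg i)
  have hB := isMonotoneOp_prodOp (isMonotoneOp_subdiff hf.1 hf.2.1)
    fun i => isMonotoneOp_subdiff (hg' i).1 (hg' i).2.1
  have hres := fun (γ : ℝ) (hγ : 0 < γ) => exists_resolvent_prodOp (hf.exists_resolvent hγ)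
    fun i => (hg' i).exists_resolvent hγ
  have hA𝒦 : (fun k => {u | sumEquiv u ∈ A (sumEquiv k)}) =
      fun k => {u | u - skewCoupling L k + sumEquiv.symm (z, -r) ∈
        prodOp (subdiff f) (fun i => subdiff (conj (g i))) k} := by
    ext k u
    simp [hA, prodOp, sumEquiv_skewCoupling, sub_eq_add_neg]
  have hmax := hA𝒦 ▸ hB.isMaximalMonotoneOp_add_linear hres (skewCoupling L)
    (fun k => (inner_skewCoupling_self L k).ge) (sumEquiv.symm (z, -r))
  refine ⟨isMonotoneOp_comap_sumEquiv_iff.1 hmax.1, fun A' hA' hle => ?_⟩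
  exact eq_of_comap_sumEquiv_eq <|
    hmax.2 _ (isMonotoneOp_comap_sumEquiv_iff.2 hA') fun k u hu => hle _ hu

/-- On `𝒦 = ℋ ⊕ 𝒢₁ ⊕ ⋯ ⊕ 𝒢ₘ`, the operator
`A(x,v) = (∂f(x) − z + Σᵢ Lᵢ* vᵢ) × ∏ᵢ (−Lᵢ x + ∂gᵢ*(vᵢ) + rᵢ)`
is maximally monotone (for the direct-sum scalar product). -/
theorem statement4
    {H : Type*} [NormedAddCommGroup H] [InnerProductSpace ℝ H] [CompleteSpace H]
    {m : ℕ} (hm : 0 < m)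
    {G : Fin m → Type*} [∀ i, NormedAddCommGroup (G i)] [∀ i, InnerProductSpace ℝ (G i)]
    [∀ i, CompleteSpace (G i)]
    (z : H) (f : H → EReal) (hf : Gamma0 f)
    (r : ∀ i, G i) (g : ∀ i, G i → EReal) (hg : ∀ i, Gamma0 (g i))
    (L : ∀ i, H →L[ℝ] G i)
    (A : (H × ∀ i, G i) → Set (H × ∀ i, G i))
    (hA : ∀ p q : H × ∀ i, G i, q ∈ A p ↔
      (q.1 - ∑ i, ContinuousLinearMap.adjoint (L i) (p.2 i) + z ∈ subdiff f p.1) ∧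
      ∀ i, q.2 i + L i p.1 - r i ∈ subdiff (conj (g i)) (p.2 i)) :
    -- A is monotone …
    ((∀ p q u v : H × ∀ i, G i, u ∈ A p → v ∈ A q →
        0 ≤ ⟪p.1 - q.1, u.1 - v.1⟫ + ∑ i, ⟪p.2 i - q.2 i, u.2 i - v.2 i⟫)) ∧
    -- … and maximally monotone
    (∀ A' : (H × ∀ i, G i) → Set (H × ∀ i, G i),
      (∀ p q u v : H × ∀ i, G i, u ∈ A' p → v ∈ A' q →
        0 ≤ ⟪p.1 - q.1, u.1 - v.1⟫ + ∑ i, ⟪p.2 i - q.2 i, u.2 i - v.2 i⟫) →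
      (∀ p, A p ⊆ A' p) → A = A') :=
  statement4_general z f hf r g hg L A hA
end
end

section
/- Let ℋ be a real Hilbert space, let α > 0, let U be a bounded self-adjoint operator on ℋ with U ⪰ αId, and let f ∈ Γ₀(ℋ). Then the set-valued operator Id + U∂f (where (U∂f)(x) = {Uu : u ∈ ∂f(x)}) has a single-valued, everywhere-defined inverse, and its resolvent J_{U∂f} = (Id + U∂f)^{-1} coincides with the proximity operator of f relative to the metric induced by U^{-1}: for every x ∈ ℋ, J_{U∂f}(x) = prox^{U^{-1}}_f(x) = argmin_{y∈ℋ} f(y) + (1/2)⟨U^{-1}(x−y), x−y⟩, and this minimizer exists and is unique. -/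
/-!
With `u = U⁻¹(x - p)`, the inclusion `x ∈ p + U ∂f(p)` reads `U⁻¹(x - p) ∈ ∂f(p)`, the
first-order optimality condition for `p` to minimise `f + ½‖x - ·‖²_{U⁻¹}`: sufficiency is the
subgradient inequality plus nonnegativity of the quadratic remainder, necessity follows by
comparing `p` with the points `p + t (y - p)` and letting `t → 0`.

Since `U⁻¹ ⪰ α / (‖U‖² + 1)`, the objective is strongly convex on `dom f`. Lower
semicontinuity at one point of the domain and strong convexity give quadratic growth, hence a
finite infimum; the midpoint inequality makes every minimising sequence Cauchy, lower
semicontinuity makes its limit a minimiser, and strict convexity makes it unique.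
-/

open scoped RealInnerProductSpace

noncomputable section

variable {E : Type*} [NormedAddCommGroup E] [InnerProductSpace ℝ E]

open Set Filter Topology

section StrongConvexOn

variable {X : Type*} [NormedAddCommGroup X] [NormedSpace ℝ X] {D : Set X} {β : ℝ} {G : X → ℝ}

lemma StrongConvexOn.sq_norm_sub_le (hG : StrongConvexOn D β G) {m : ℝ}
    (hm : ∀ z ∈ D, m ≤ G z) {y z : X} (hy : y ∈ D) (hz : z ∈ D) :
    β / 8 * ‖y - z‖ ^ 2 ≤ (G y + G z) / 2 - m := by
  have hhalf : (0 : ℝ) ≤ 1 / 2 := by norm_num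
  have hsum : (1 / 2 : ℝ) + 1 / 2 = 1 := by norm_num
  have hmid := hG.2 hy hz hhalf hhalf hsum
  have := hm _ (hG.1 hy hz hhalf hhalf hsum)
  simp only [smul_eq_mul] at hmid
  linarith

lemma StrongConvexOn.bddBelow_image (hG : StrongConvexOn D β G) (hβ : 0 < β) {x₀ : X}
    (hx₀ : x₀ ∈ D) {δ c : ℝ} (hδ : 0 < δ) (hc : ∀ y ∈ D, dist y x₀ < δ → c < G y) :
    BddBelow (G '' D) := by
  set A := G x₀ - c
  refine ⟨min c (G x₀ - 4 * A ^ 2 / (β * δ ^ 2)), ?_⟩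
  rintro _ ⟨y, hy, rfl⟩
  set r := ‖y - x₀‖
  by_cases hr : r < δ
  · exact (min_le_left _ _).trans (hc y hy (by rwa [dist_eq_norm])).le
  have hr0 : 0 < r := hδ.trans_le (not_lt.mp hr)
  set t := δ / (2 * r)
  have ht0 : 0 < t := by positivity
  have htr : t * r = δ / 2 := by simp only [t]; field_simp
  have ht1 : t ≤ 1 / 2 := by rw [div_le_iff₀ (by positivity)]; linarith
  have hz := hc (t • y + (1 - t) • x₀) (hG.1 hy hx₀ ht0.le (by linarith) (by ring)) (by
    rw [dist_eq_norm, show t • y + (1 - t) • x₀ - x₀ = t • (y - x₀) by module, norm_smul,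
      Real.norm_of_nonneg ht0.le, htr]
    linarith)
  have hconv := hG.2 hy hx₀ ht0.le (by linarith : 0 ≤ 1 - t) (by ring)
  simp only [smul_eq_mul] at hconv
  -- The point `t • y + (1 - t) • x₀` is at distance `δ / 2` from `x₀`, so `c` bounds `G` there;
  -- strong convexity along `[x₀, y]` turns this into quadratic growth of `G y` in `r`.
  have key : G x₀ - 2 * A * r / δ + β / 4 * r ^ 2 ≤ G y := by
    have h1 : t * (G x₀ - A / t + β / 4 * r ^ 2) ≤ t * G y := by
      rw [mul_add, mul_sub, mul_div_cancel₀ _ ht0.ne']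
      have : t * (β / 4 * r ^ 2) ≤ t * (1 - t) * (β / 2 * r ^ 2) := by
        have := mul_nonneg (mul_nonneg ht0.le (by linarith : 0 ≤ 1 / 2 - t))
          (mul_nonneg hβ.le (sq_nonneg r))
        nlinarith
      linarith
    have h2 : A / t = 2 * A * r / δ := by simp only [t]; field_simp
    rw [← h2]
    exact le_of_mul_le_mul_left h1 ht0
  refine (min_le_right _ _).trans (le_trans ?_ key)
  have : 0 ≤ β / 4 * (r - 4 * A / (β * δ)) ^ 2 := by positivity
  have h2 : β / 4 * (r - 4 * A / (β * δ)) ^ 2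
      = β / 4 * r ^ 2 - 2 * A * r / δ + 4 * A ^ 2 / (β * δ ^ 2) := by
    field_simp; ring
  linarith

lemma StrongConvexOn.cauchySeq_of_antitone (hG : StrongConvexOn D β G) (hβ : 0 < β) {m : ℝ}
    (hm : ∀ z ∈ D, m ≤ G z) {y : ℕ → X} (hyD : ∀ n, y n ∈ D) (hanti : Antitone (G ∘ y))
    (hlim : Tendsto (G ∘ y) atTop (𝓝 m)) : CauchySeq y := by
  refine cauchySeq_of_le_tendsto_0 (fun N => √(8 / β * (G (y N) - m))) (fun n k N hn hk => ?_) ?_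
  · rw [dist_eq_norm]
    refine Real.le_sqrt_of_sq_le ?_
    have := hG.sq_norm_sub_le hm (hyD n) (hyD k)
    have hn' : G (y n) ≤ G (y N) := hanti hn
    have hk' : G (y k) ≤ G (y N) := hanti hk
    rw [div_mul_eq_mul_div, le_div_iff₀ hβ]
    linarith
  · have : Tendsto (fun N => 8 / β * (G (y N) - m)) atTop (𝓝 (8 / β * (m - m))) :=
      (hlim.sub_const m).const_mul _
    simpa using this.sqrt

end StrongConvexOn

section ExtendTop

variable {α : Type*} {D : Set α} {G : α → ℝ} {p y : α}

open Classical in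
def extendTop (D : Set α) (G : α → ℝ) : α → EReal := fun y => if y ∈ D then (G y : EReal) else ⊤

lemma extendTop_of_mem (hy : y ∈ D) : extendTop D G y = G y := if_pos hy

lemma extendTop_of_notMem (hy : y ∉ D) : extendTop D G y = ⊤ := if_neg hy

lemma extendTop_add_coe (q : α → ℝ) :
    (fun y => extendTop D G y + (q y : EReal)) = extendTop D (G + q) := by
  ext y
  by_cases hy : y ∈ D
  · simp only [extendTop_of_mem hy, Pi.add_apply, EReal.coe_add]
  · simp only [extendTop_of_notMem hy, EReal.top_add_coe]

lemma mem_of_isMinOn_extendTop (hD : D.Nonempty) (hp : IsMinOn (extendTop D G) univ p) :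
    p ∈ D := by
  obtain ⟨y, hy⟩ := hD
  by_contra hpD
  have : extendTop D G p ≤ extendTop D G y := hp (mem_univ y)
  rw [extendTop_of_notMem hpD, extendTop_of_mem hy, top_le_iff] at this
  exact EReal.coe_ne_top _ this

lemma isMinOn_extendTop_iff (hp : p ∈ D) : IsMinOn (extendTop D G) univ p ↔ IsMinOn G D p := by
  simp only [isMinOn_iff, extendTop_of_mem hp]
  refine ⟨fun h y hy => ?_, fun h y => ?_⟩
  · simpa [extendTop_of_mem hy] using h y
  · by_cases hy : y ∈ D
    · simpa [extendTop_of_mem hy] using h y hy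
    · simp [extendTop_of_notMem hy]

lemma eq_extendTop_toReal {f : α → EReal} (hbot : ∀ y, f y ≠ ⊥) :
    f = extendTop {y | f y ≠ ⊤} fun y => (f y).toReal := by
  ext y
  by_cases hy : f y = ⊤
  · rw [extendTop_of_notMem (not_not.mpr hy), hy]
  · rw [extendTop_of_mem hy, EReal.coe_toReal hy (hbot y)]

end ExtendTop

lemma convexOn_toReal {X : Type*} [AddCommGroup X] [Module ℝ X] {f : X → EReal}
    (hbot : ∀ y, f y ≠ ⊥)
    (hconv : ∀ x y : X, ∀ t : ℝ, 0 ≤ t → t ≤ 1 →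
      f (t • x + (1 - t) • y) ≤ (t : EReal) * f x + ((1 - t : ℝ) : EReal) * f y) :
    ConvexOn ℝ {y | f y ≠ ⊤} fun y => (f y).toReal := by
  have hle : ∀ x, f x ≠ ⊤ → ∀ y, f y ≠ ⊤ → ∀ a b : ℝ, 0 ≤ a → 0 ≤ b → a + b = 1 →
      f (a • x + b • y) ≤ ((a * (f x).toReal + b * (f y).toReal : ℝ) : EReal) := by
    intro x hx y hy a b ha hb hab
    obtain rfl : b = 1 - a := by linarith
    simpa only [EReal.coe_add, EReal.coe_mul, EReal.coe_toReal hx (hbot x),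
      EReal.coe_toReal hy (hbot y)] using hconv x y a ha (by linarith)
  refine ⟨fun x hx y hy a b ha hb hab => ne_top_of_le_ne_top (EReal.coe_ne_top _)
    (hle x hx y hy a b ha hb hab), fun x hx y hy a b ha hb hab => ?_⟩
  have h := hle x hx y hy a b ha hb hab
  rwa [← EReal.coe_toReal (ne_top_of_le_ne_top (EReal.coe_ne_top _) h) (hbot _),
    EReal.coe_le_coe_iff] at h

lemma LowerSemicontinuous.le_of_tendsto {X γ ι : Type*} [TopologicalSpace X] [LinearOrder γ]
    [TopologicalSpace γ] [OrderTopology γ] [DenselyOrdered γ] {l : Filter ι} [l.NeBot]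
    {g : X → γ} (hg : LowerSemicontinuous g) {y : ι → X} {p : X} (hy : Tendsto y l (𝓝 p))
    {c : γ} (hc : Tendsto (g ∘ y) l (𝓝 c)) : g p ≤ c :=
  le_of_forall_lt_imp_le_of_dense fun _ ha =>
    ge_of_tendsto hc ((hy.eventually (hg p _ ha)).mono fun _ h => h.le)

section Minimization

variable {X : Type*} [NormedAddCommGroup X] [NormedSpace ℝ X] {D : Set X} {β : ℝ} {G : X → ℝ}

lemma StrongConvexOn.exists_isMinOn_extendTop [CompleteSpace X] (hG : StrongConvexOn D β G)
    (hβ : 0 < β) (hD : D.Nonempty) (hlsc : LowerSemicontinuous (extendTop D G)) :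
    ∃ p, IsMinOn (extendTop D G) univ p := by
  obtain ⟨x₀, hx₀⟩ := hD
  have hlt : ((G x₀ - 1 : ℝ) : EReal) < extendTop D G x₀ := by
    rw [extendTop_of_mem hx₀, EReal.coe_lt_coe_iff]
    linarith
  obtain ⟨δ, hδ, hball⟩ := Metric.eventually_nhds_iff.mp (hlsc x₀ _ hlt)
  have hbdd := hG.bddBelow_image hβ hx₀ hδ (c := G x₀ - 1) fun y hy hyx => by
    have h : ((G x₀ - 1 : ℝ) : EReal) < extendTop D G y := hball hyx
    rwa [extendTop_of_mem hy, EReal.coe_lt_coe_iff] at h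
  set m := sInf (G '' D)
  have hm : ∀ z ∈ D, m ≤ G z := fun z hz => csInf_le hbdd (mem_image_of_mem G hz)
  obtain ⟨u, hu_anti, hu_lim, hu_mem⟩ := exists_seq_tendsto_sInf ⟨_, mem_image_of_mem G hx₀⟩ hbdd
  choose y hyD hyu using hu_mem
  have hGy : G ∘ y = u := funext hyu
  have hcauchy := hG.cauchySeq_of_antitone hβ hm hyD (hGy ▸ hu_anti) (hGy ▸ hu_lim)
  obtain ⟨p, hp⟩ := cauchySeq_tendsto_of_complete hcauchy
  have hpm : extendTop D G p ≤ m := hlsc.le_of_tendsto hp <| by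
    have : (extendTop D G ∘ y) = fun n => (u n : EReal) := by
      ext n; simp [extendTop_of_mem (hyD n), hyu]
    rw [this]
    exact EReal.tendsto_coe.mpr hu_lim
  have hpD : p ∈ D := by
    by_contra hpD
    rw [extendTop_of_notMem hpD, top_le_iff] at hpm
    exact EReal.coe_ne_top _ hpm
  refine ⟨p, (isMinOn_extendTop_iff hpD).mpr fun z hz => ?_⟩
  rw [extendTop_of_mem hpD, EReal.coe_le_coe_iff] at hpm
  exact hpm.trans (hm z hz)

theorem StrongConvexOn.existsUnique_isMinOn_extendTop [CompleteSpace X]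
    (hG : StrongConvexOn D β G) (hβ : 0 < β) (hD : D.Nonempty)
    (hlsc : LowerSemicontinuous (extendTop D G)) :
    ∃! p, IsMinOn (extendTop D G) univ p := by
  obtain ⟨p, hp⟩ := hG.exists_isMinOn_extendTop hβ hD hlsc
  refine ⟨p, hp, fun p' hp' => ?_⟩
  have hpD := mem_of_isMinOn_extendTop hD hp
  have hp'D := mem_of_isMinOn_extendTop hD hp'
  exact (hG.strictConvexOn hβ).eq_of_isMinOn ((isMinOn_extendTop_iff hp'D).mp hp')
    ((isMinOn_extendTop_iff hpD).mp hp) hp'D hpD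

end Minimization

section Prox

variable {H : Type*} [NormedAddCommGroup H] [InnerProductSpace ℝ H] {V : H →L[ℝ] H}

def halfSqDist (V : H →L[ℝ] H) (x y : H) : ℝ := 1 / 2 * ⟪V (x - y), x - y⟫

lemma halfSqDist_add_smul_sub (hV : (V : H →ₗ[ℝ] H).IsSymmetric) (x p y : H) (t : ℝ) :
    halfSqDist V x (p + t • (y - p))
      = halfSqDist V x p - t * ⟪V (x - p), y - p⟫ + t ^ 2 / 2 * ⟪V (y - p), y - p⟫ := by
  rw [halfSqDist, halfSqDist, show x - (p + t • (y - p)) = (x - p) - t • (y - p) by abel]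
  generalize x - p = a
  generalize y - p = c
  have hsym : ⟪V c, a⟫ = ⟪V a, c⟫ := by rw [real_inner_comm]; exact (hV a c).symm
  simp only [map_sub, map_smul, inner_sub_left, inner_sub_right, real_inner_smul_left,
    real_inner_smul_right, hsym]
  ring

lemma halfSqDist_le_add_inner (hV : (V : H →ₗ[ℝ] H).IsSymmetric) (hVpos : ∀ a, 0 ≤ ⟪V a, a⟫)
    (x p y : H) : halfSqDist V x p ≤ halfSqDist V x y + ⟪y - p, V (x - p)⟫ := by
  have h := halfSqDist_add_smul_sub hV x p y 1
  rw [one_smul, add_sub_cancel] at h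
  rw [h, real_inner_comm]
  nlinarith [hVpos (y - p)]

lemma strongConvexOn_halfSqDist (hV : (V : H →ₗ[ℝ] H).IsSymmetric) {β : ℝ}
    (hVβ : ∀ a, β * ‖a‖ ^ 2 ≤ ⟪V a, a⟫) {D : Set H} (hD : Convex ℝ D) (x : H) :
    StrongConvexOn D β (halfSqDist V x) := by
  refine ⟨hD, fun y _ z _ a b ha hb hab => ?_⟩
  obtain rfl : b = 1 - a := by linarith
  have hmid := halfSqDist_add_smul_sub hV x z y a
  have hend := halfSqDist_add_smul_sub hV x z y 1
  rw [show z + a • (y - z) = a • y + (1 - a) • z by module] at hmid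
  rw [one_smul, add_sub_cancel] at hend
  simp only [smul_eq_mul]
  nlinarith [mul_nonneg ha hb, hVβ (y - z)]

lemma continuous_halfSqDist (V : H →L[ℝ] H) (x : H) : Continuous (halfSqDist V x) := by
  unfold halfSqDist
  fun_prop

lemma isMinOn_of_mem_subdiff (hV : (V : H →ₗ[ℝ] H).IsSymmetric) (hVpos : ∀ a, 0 ≤ ⟪V a, a⟫)
    {f : H → EReal} {x p : H} (hp : V (x - p) ∈ subdiff f p) :
    IsMinOn (fun y => f y + (halfSqDist V x y : EReal)) univ p :=
  isMinOn_univ_iff.mpr fun y => calc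
    f p + (halfSqDist V x p : EReal)
        ≤ f p + ((halfSqDist V x y + ⟪y - p, V (x - p)⟫ : ℝ) : EReal) := by
      gcongr; exact halfSqDist_le_add_inner hV hVpos x p y
    _ = ((⟪y - p, V (x - p)⟫ : ℝ) + f p) + (halfSqDist V x y : EReal) := by
      rw [EReal.coe_add]; ac_rfl
    _ ≤ f y + (halfSqDist V x y : EReal) := by gcongr; exact hp y

lemma mem_subdiff_extendTop_of_isMinOn (hV : (V : H →ₗ[ℝ] H).IsSymmetric) {D : Set H}
    {F : H → ℝ} (hF : ConvexOn ℝ D F) {x p : H}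
    (hp : IsMinOn (fun y => extendTop D F y + (halfSqDist V x y : EReal)) univ p) :
    V (x - p) ∈ subdiff (extendTop D F) p := by
  intro y
  by_cases hy : y ∈ D
  swap
  · rw [extendTop_of_notMem hy]; exact le_top
  rw [extendTop_add_coe] at hp
  have hpD := mem_of_isMinOn_extendTop ⟨y, hy⟩ hp
  have hmin := (isMinOn_extendTop_iff hpD).mp hp
  rw [extendTop_of_mem hpD, extendTop_of_mem hy, ← EReal.coe_add, EReal.coe_le_coe_iff]
  have hslope : ∀ t ∈ Ioo (0 : ℝ) 1,
      ⟪y - p, V (x - p)⟫ + F p - F y ≤ t / 2 * ⟪V (y - p), y - p⟫ := by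
    rintro t ⟨ht0, ht1⟩
    have hz : p + t • (y - p) = t • y + (1 - t) • p := by module
    have hzD : p + t • (y - p) ∈ D := hF.1.add_smul_sub_mem hpD hy ⟨ht0.le, ht1.le⟩
    have hmin_z : F p + halfSqDist V x p
        ≤ F (p + t • (y - p)) + halfSqDist V x (p + t • (y - p)) := hmin hzD
    have hFz := hF.2 hy hpD ht0.le (by linarith : 0 ≤ 1 - t) (by ring)
    rw [← hz] at hFz
    simp only [smul_eq_mul] at hFz
    rw [halfSqDist_add_smul_sub hV] at hmin_z
    rw [real_inner_comm (V (x - p)) (y - p)]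
    refine le_of_mul_le_mul_left ?_ ht0
    nlinarith
  have hlim : Tendsto (fun t : ℝ => t / 2 * ⟪V (y - p), y - p⟫) (𝓝[>] 0) (𝓝 0) := by
    have hcont : Continuous fun t : ℝ => t / 2 * ⟪V (y - p), y - p⟫ := by fun_prop
    simpa using tendsto_nhdsWithin_of_tendsto_nhds (hcont.tendsto 0)
  have := ge_of_tendsto hlim (eventually_of_mem (Ioo_mem_nhdsGT one_pos) hslope)
  linarith

lemma isMinOn_extendTop_add_halfSqDist_iff (hV : (V : H →ₗ[ℝ] H).IsSymmetric)
    (hVpos : ∀ a, 0 ≤ ⟪V a, a⟫) {D : Set H} {F : H → ℝ} (hF : ConvexOn ℝ D F) {x p : H} :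
    IsMinOn (fun y => extendTop D F y + (halfSqDist V x y : EReal)) univ p ↔
      V (x - p) ∈ subdiff (extendTop D F) p :=
  ⟨mem_subdiff_extendTop_of_isMinOn hV hF, isMinOn_of_mem_subdiff hV hVpos⟩

theorem existsUnique_isMinOn_extendTop_add_halfSqDist [CompleteSpace H]
    (hV : (V : H →ₗ[ℝ] H).IsSymmetric) {β : ℝ} (hβ : 0 < β)
    (hVβ : ∀ a, β * ‖a‖ ^ 2 ≤ ⟪V a, a⟫) {D : Set H} {F : H → ℝ} (hF : ConvexOn ℝ D F)
    (hD : D.Nonempty) (hlsc : LowerSemicontinuous (extendTop D F)) (x : H) :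
    ∃! p, IsMinOn (fun y => extendTop D F y + (halfSqDist V x y : EReal)) univ p := by
  have hsum : StrongConvexOn D β (F + halfSqDist V x) := by
    have h := hF.uniformConvexOn_zero.add (strongConvexOn_halfSqDist hV hVβ hF.1 x)
    rwa [zero_add] at h
  have hlsc_sum : LowerSemicontinuous fun y => extendTop D F y + (halfSqDist V x y : EReal) :=
    hlsc.add' (continuous_coe_real_ereal.comp (continuous_halfSqDist V x)).lowerSemicontinuous
      fun y => EReal.continuousAt_add (.inr (EReal.coe_ne_bot _)) (.inr (EReal.coe_ne_top _))
  rw [extendTop_add_coe] at hlsc_sum ⊢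
  exact hsum.existsUnique_isMinOn_extendTop hβ hD hlsc_sum

lemma isSymmetric_of_rightInverse {U : H →L[ℝ] H} (hU : (U : H →ₗ[ℝ] H).IsSymmetric)
    (hUV : Function.RightInverse V U) : (V : H →ₗ[ℝ] H).IsSymmetric := fun a b => by
  simp only [ContinuousLinearMap.coe_coe]
  calc ⟪V a, b⟫ = ⟪V a, U (V b)⟫ := by rw [hUV b]
    _ = ⟪U (V a), V b⟫ := (hU _ _).symm
    _ = ⟪a, V b⟫ := by rw [hUV a]

lemma mul_sq_norm_le_inner_of_rightInverse {U : H →L[ℝ] H} {α : ℝ} (hα : 0 ≤ α)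
    (hUα : ∀ a, α * ‖a‖ ^ 2 ≤ ⟪U a, a⟫) (hUV : Function.RightInverse V U) (a : H) :
    α / (‖U‖ ^ 2 + 1) * ‖a‖ ^ 2 ≤ ⟪V a, a⟫ := by
  have hnorm : ‖a‖ ≤ ‖U‖ * ‖V a‖ := by
    conv_lhs => rw [← hUV a]
    exact U.le_opNorm _
  have hsq : ‖a‖ ^ 2 ≤ (‖U‖ ^ 2 + 1) * ‖V a‖ ^ 2 := by
    nlinarith [norm_nonneg a, norm_nonneg (V a), U.opNorm_nonneg]
  have hUVa := hUα (V a)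
  rw [hUV a, real_inner_comm] at hUVa
  rw [div_mul_eq_mul_div, div_le_iff₀ (by positivity)]
  nlinarith

end Prox

/-- For `U` bounded self-adjoint with `U ⪰ αId` (`Uinv` is its inverse) and
`f ∈ Γ₀(ℋ)`, the operator `Id + U∂f` has a single-valued everywhere-defined inverse,
which coincides with the proximity operator of `f` in the metric induced by `U⁻¹`,
i.e. `J_{U∂f}(x)` is the unique minimizer of `y ↦ f(y) + ½⟨U⁻¹(x−y), x−y⟩`, which
exists and is unique. -/
theorem statement7
    {H : Type*} [NormedAddCommGroup H] [InnerProductSpace ℝ H] [CompleteSpace H]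
    (α : ℝ) (hα : 0 < α)
    (U : H →L[ℝ] H)
    (hUsa : ∀ x y : H, ⟪U x, y⟫ = ⟪x, U y⟫)
    (hUα : ∀ x : H, α * ‖x‖ ^ 2 ≤ ⟪U x, x⟫)
    (Uinv : H →L[ℝ] H)
    (hUinv1 : U.comp Uinv = ContinuousLinearMap.id ℝ H)
    (hUinv2 : Uinv.comp U = ContinuousLinearMap.id ℝ H)
    (f : H → EReal) (hf : Gamma0 f) :
    -- `Id + U ∂f` has a single-valued, everywhere defined inverse …
    (∀ x : H, ∃! p : H, ∃ u ∈ subdiff f p, x = p + U u) ∧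
    -- … which coincides with `prox_f^{U⁻¹}` : `p = J_{U∂f}(x)` iff `p` minimizes
    -- `y ↦ f(y) + ½⟨U⁻¹(x−y), x−y⟩` …
    (∀ x p : H,
      (∃ u ∈ subdiff f p, x = p + U u) ↔
      ∀ y : H, f p + ((1 / 2 * ⟪Uinv (x - p), x - p⟫ : ℝ) : EReal)
        ≤ f y + ((1 / 2 * ⟪Uinv (x - y), x - y⟫ : ℝ) : EReal)) ∧
    -- … and this minimizer exists and is unique.
    (∀ x : H, ∃! p : H,
      ∀ y : H, f p + ((1 / 2 * ⟪Uinv (x - p), x - p⟫ : ℝ) : EReal)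
        ≤ f y + ((1 / 2 * ⟪Uinv (x - y), x - y⟫ : ℝ) : EReal)) := by
  obtain ⟨hdom, hbot, hlsc, hconv⟩ := hf
  have hD : {y | f y ≠ ⊤}.Nonempty := hdom
  have hF := convexOn_toReal hbot hconv
  rw [eq_extendTop_toReal hbot] at hlsc ⊢
  generalize {y | f y ≠ ⊤} = D at hD hF hlsc ⊢
  generalize (fun y => (f y).toReal) = F at hF hlsc ⊢
  have hUV : Function.RightInverse Uinv U := fun a => by simpa using DFunLike.congr_fun hUinv1 a
  have hVU : Function.LeftInverse Uinv U := fun a => by simpa using DFunLike.congr_fun hUinv2 a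
  have hV := isSymmetric_of_rightInverse hUsa hUV
  have hβ : 0 < α / (‖U‖ ^ 2 + 1) := by positivity
  have hVβ := mul_sq_norm_le_inner_of_rightInverse hα.le hUα hUV
  have hVpos : ∀ a, 0 ≤ ⟪Uinv a, a⟫ := fun a =>
    (by positivity : (0 : ℝ) ≤ α / (‖U‖ ^ 2 + 1) * ‖a‖ ^ 2).trans (hVβ a)
  have hsolve : ∀ x p, (∃ u ∈ subdiff (extendTop D F) p, x = p + U u) ↔
      Uinv (x - p) ∈ subdiff (extendTop D F) p := fun x p =>
    ⟨fun ⟨u, hu, hx⟩ => by rwa [hx, add_sub_cancel_left, hVU],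
      fun h => ⟨_, h, by rw [hUV, add_sub_cancel]⟩⟩
  have hprox : ∀ x p, (∃ u ∈ subdiff (extendTop D F) p, x = p + U u) ↔
      IsMinOn (fun y => extendTop D F y + (halfSqDist Uinv x y : EReal)) univ p := fun x p =>
    (hsolve x p).trans (isMinOn_extendTop_add_halfSqDist_iff hV hVpos hF).symm
  have hunique := existsUnique_isMinOn_extendTop_add_halfSqDist hV hβ hVβ hF hD hlsc
  exact ⟨fun x => (existsUnique_congr (hprox x)).mpr (hunique x),
    fun x p => (hprox x p).trans isMinOn_univ_iff,
    fun x => (existsUnique_congr fun p => isMinOn_univ_iff).mp (hunique x)⟩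
end
end

section
/- Let ℋ and 𝒢_1,…,𝒢_m be real Hilbert spaces, let α > 0, let U be a bounded self-adjoint operator on ℋ with U ⪰ αId, for every i ∈ {1,…,m} let U_i be a bounded self-adjoint operator on 𝒢_i with U_i ⪰ αId, and let L_i : ℋ → 𝒢_i be bounded linear operators. Suppose that Σ_{i=1}^m ‖U_i^{1/2} L_i U^{1/2}‖² < 1. Then the bounded linear operator W on 𝒦 = ℋ ⊕ 𝒢_1 ⊕ ⋯ ⊕ 𝒢_m defined by W(x, v_1,…,v_m) = ( U^{-1}x − Σ_{i=1}^m L_i^* v_i, −L_1 x + U_1^{-1}v_1, …, −L_m x + U_m^{-1}v_m ) is self-adjoint, and there exists ρ > 0 such that W ⪰ ρ Id, i.e. ⟨W(x,v_1,…,v_m), (x,v_1,…,v_m)⟩ ≥ ρ( ‖x‖² + Σ_{i=1}^m ‖v_i‖² ) for all (x,v_1,…,v_m) ∈ 𝒦. -/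
/-!
Substitute `x = U^{1/2} a` and `vᵢ = Uᵢ^{1/2} bᵢ`. Then `⟪U⁻¹x, x⟫ = ‖a‖²`, `⟪Uᵢ⁻¹vᵢ, vᵢ⟫ = ‖bᵢ‖²`
and the cross term `⟪Lᵢ x, vᵢ⟫` becomes `⟪Uᵢ^{1/2} Lᵢ U^{1/2} a, bᵢ⟫`. By Cauchy–Schwarz and AM–GM,
`⟪Wp, p⟫ ≥ (1 - √S) (‖a‖² + Σᵢ ‖bᵢ‖²)` with `S = Σᵢ ‖Uᵢ^{1/2} Lᵢ U^{1/2}‖² < 1`, and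
`‖a‖² + Σᵢ ‖bᵢ‖²` dominates `‖p‖²` up to the norms of the square roots.
-/

open scoped RealInnerProductSpace

open ContinuousLinearMap

section Symmetric

variable {E : Type*} [NormedAddCommGroup E] [InnerProductSpace ℝ E]

theorem LinearMap.IsSymmetric.of_comp_eq_id {U V : E →L[ℝ] E}
    (hU : (U : E →ₗ[ℝ] E).IsSymmetric) (hUV : U ∘L V = ContinuousLinearMap.id ℝ E) :
    (V : E →ₗ[ℝ] E).IsSymmetric := by
  have hV : ∀ x, U (V x) = x := fun x => congr($hUV x)
  intro x y
  calc ⟪V x, y⟫ = ⟪V x, U (V y)⟫ := by rw [hV]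
    _ = ⟪U (V x), V y⟫ := (hU _ _).symm
    _ = ⟪x, V y⟫ := by rw [hV]

theorem exists_apply_eq_and_inner_eq_norm_sq {R V : E →L[ℝ] E}
    (hR : (R : E →ₗ[ℝ] E).IsSymmetric) (hRV : (R ∘L R) ∘L V = ContinuousLinearMap.id ℝ E) (x : E) :
    ∃ a, R a = x ∧ ⟪V x, x⟫ = ‖a‖ ^ 2 := by
  have hx : R (R (V x)) = x := congr($hRV x)
  refine ⟨R (V x), hx, ?_⟩
  calc ⟪V x, x⟫ = ⟪R (R (V x)), V x⟫ := by rw [hx, real_inner_comm]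
    _ = ‖R (V x)‖ ^ 2 := by rw [← real_inner_self_eq_norm_sq]; exact hR _ _

theorem inner_apply_le_norm_comp_mul {F : Type*} [NormedAddCommGroup F] [InnerProductSpace ℝ F]
    {R : E →L[ℝ] E} {R' : F →L[ℝ] F} (hR' : (R' : F →ₗ[ℝ] F).IsSymmetric) (L : E →L[ℝ] F)
    (a : E) (b : F) : ⟪L (R a), R' b⟫ ≤ ‖R' ∘L L ∘L R‖ * ‖a‖ * ‖b‖ := by
  calc ⟪L (R a), R' b⟫ = ⟪(R' ∘L L ∘L R) a, b⟫ := (hR' _ _).symm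
    _ ≤ ‖(R' ∘L L ∘L R) a‖ * ‖b‖ := real_inner_le_norm _ _
    _ ≤ ‖R' ∘L L ∘L R‖ * ‖a‖ * ‖b‖ := by gcongr; exact le_opNorm _ _

end Symmetric

theorem one_sub_sqrt_mul_le_of_le_mul {ι : Type*} (s : Finset ι) (a : ℝ) (t b c : ι → ℝ)
    (hc : ∀ i ∈ s, c i ≤ t i * a * b i) :
    (1 - √(∑ i ∈ s, t i ^ 2)) * (a ^ 2 + ∑ i ∈ s, b i ^ 2)
      ≤ a ^ 2 + ∑ i ∈ s, b i ^ 2 - 2 * ∑ i ∈ s, c i := by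
  set B := ∑ i ∈ s, b i ^ 2
  have hB : 0 ≤ B := Finset.sum_nonneg fun i _ => sq_nonneg _
  have hCS : |∑ i ∈ s, t i * b i| ≤ √(∑ i ∈ s, t i ^ 2) * √B := by
    rw [abs_le]
    constructor
    · have := Real.sum_mul_le_sqrt_mul_sqrt s (fun i => - t i) b
      simp only [neg_sq, neg_mul, Finset.sum_neg_distrib] at this
      linarith
    · exact Real.sum_mul_le_sqrt_mul_sqrt s t b
  have hAM : 2 * |a| * √B ≤ a ^ 2 + B := by
    have := two_mul_le_add_sq |a| √B
    rwa [sq_abs, Real.sq_sqrt hB] at this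
  have hsum : ∑ i ∈ s, c i ≤ |a| * (√(∑ i ∈ s, t i ^ 2) * √B) :=
    calc ∑ i ∈ s, c i ≤ a * ∑ i ∈ s, t i * b i := by
          rw [Finset.mul_sum]
          exact Finset.sum_le_sum fun i hi => (hc i hi).trans_eq (by ring)
      _ ≤ |a| * |∑ i ∈ s, t i * b i| := by rw [← abs_mul]; exact le_abs_self _
      _ ≤ _ := by gcongr
  nlinarith [Real.sqrt_nonneg (∑ i ∈ s, t i ^ 2)]

theorem sq_add_sum_sq_le_mul {ι : Type*} (s : Finset ι) {x a r : ℝ} {v b q : ι → ℝ}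
    (hx₀ : 0 ≤ x) (hx : x ≤ r * a) (hv₀ : ∀ i ∈ s, 0 ≤ v i) (hv : ∀ i ∈ s, v i ≤ q i * b i) :
    x ^ 2 + ∑ i ∈ s, v i ^ 2 ≤ (1 + r ^ 2 + ∑ i ∈ s, q i ^ 2) * (a ^ 2 + ∑ i ∈ s, b i ^ 2) := by
  set C := 1 + r ^ 2 + ∑ i ∈ s, q i ^ 2
  have hq : 0 ≤ ∑ i ∈ s, q i ^ 2 := Finset.sum_nonneg fun i _ => sq_nonneg _
  have hxa : x ^ 2 ≤ C * a ^ 2 :=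
    calc x ^ 2 ≤ r ^ 2 * a ^ 2 := by rw [← mul_pow]; gcongr
      _ ≤ C * a ^ 2 := by gcongr; linarith
  have hvb : ∀ i ∈ s, v i ^ 2 ≤ C * b i ^ 2 := fun i hi =>
    calc v i ^ 2 ≤ q i ^ 2 * b i ^ 2 := by rw [← mul_pow]; gcongr <;> simp [*]
      _ ≤ C * b i ^ 2 := by
        gcongr
        have := Finset.single_le_sum (fun j _ => sq_nonneg (q j)) hi
        linarith [sq_nonneg r]
  rw [mul_add, Finset.mul_sum]
  exact add_le_add hxa (Finset.sum_le_sum hvb)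

section DirectSum

variable {H : Type*} [NormedAddCommGroup H] [InnerProductSpace ℝ H]
  {ι : Type*} [Fintype ι] {G : ι → Type*} [∀ i, NormedAddCommGroup (G i)]
  [∀ i, InnerProductSpace ℝ (G i)]

def directSumInner (p q : H × ∀ i, G i) : ℝ := ⟪p.1, q.1⟫ + ∑ i, ⟪p.2 i, q.2 i⟫

variable [CompleteSpace H] [∀ i, CompleteSpace (G i)]

/-- The operator `W`, with `A = U⁻¹` and `B i = Uᵢ⁻¹`. -/
noncomputable def primalDualOp (A : H →L[ℝ] H) (B : ∀ i, G i →L[ℝ] G i) (L : ∀ i, H →L[ℝ] G i)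
    (p : H × ∀ i, G i) : H × ∀ i, G i :=
  (A p.1 - ∑ i, adjoint (L i) (p.2 i), fun i => -(L i p.1) + B i (p.2 i))

variable {A : H →L[ℝ] H} {B : ∀ i, G i →L[ℝ] G i} (L : ∀ i, H →L[ℝ] G i)

theorem directSumInner_primalDualOp_comm (hA : (A : H →ₗ[ℝ] H).IsSymmetric)
    (hB : ∀ i, (B i : G i →ₗ[ℝ] G i).IsSymmetric) (p q : H × ∀ i, G i) :
    directSumInner (primalDualOp A B L p) q = directSumInner p (primalDualOp A B L q) := by
  have hAB : ⟪A p.1, q.1⟫ + ∑ i, ⟪B i (p.2 i), q.2 i⟫ = ⟪p.1, A q.1⟫ + ∑ i, ⟪p.2 i, B i (q.2 i)⟫ :=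
    congr($(hA p.1 q.1) + $(Finset.sum_congr rfl fun i _ => hB i (p.2 i) (q.2 i)))
  simp only [directSumInner, primalDualOp, inner_sub_left, inner_sub_right, inner_add_left,
    inner_add_right, inner_neg_left, inner_neg_right, sum_inner, inner_sum, adjoint_inner_left,
    adjoint_inner_right, Finset.sum_add_distrib, Finset.sum_neg_distrib]
  simp only [real_inner_comm (L _ _)]
  linarith

theorem directSumInner_primalDualOp_self (p : H × ∀ i, G i) :
    directSumInner (primalDualOp A B L p) p
      = ⟪A p.1, p.1⟫ + ∑ i, ⟪B i (p.2 i), p.2 i⟫ - 2 * ∑ i, ⟪L i p.1, p.2 i⟫ := by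
  simp only [directSumInner, primalDualOp, inner_sub_left, inner_add_left, inner_neg_left,
    sum_inner, adjoint_inner_left, Finset.sum_add_distrib, Finset.sum_neg_distrib]
  simp only [real_inner_comm (L _ _)]
  ring

end DirectSum

section Coercive

variable {H : Type*} [NormedAddCommGroup H] [InnerProductSpace ℝ H] [CompleteSpace H]
  {ι : Type*} [Fintype ι] {G : ι → Type*} [∀ i, NormedAddCommGroup (G i)]
  [∀ i, InnerProductSpace ℝ (G i)] [∀ i, CompleteSpace (G i)]

theorem exists_pos_mul_le_directSumInner_primalDualOp {R A : H →L[ℝ] H}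
    (hR : (R : H →ₗ[ℝ] H).IsSymmetric) (hRA : (R ∘L R) ∘L A = ContinuousLinearMap.id ℝ H)
    {R' B : ∀ i, G i →L[ℝ] G i} (hR' : ∀ i, (R' i : G i →ₗ[ℝ] G i).IsSymmetric)
    (hR'B : ∀ i, (R' i ∘L R' i) ∘L B i = ContinuousLinearMap.id ℝ (G i))
    (L : ∀ i, H →L[ℝ] G i) (hsum : ∑ i, ‖R' i ∘L L i ∘L R‖ ^ 2 < 1) :
    ∃ ρ : ℝ, 0 < ρ ∧ ∀ p : H × ∀ i, G i,
      ρ * (‖p.1‖ ^ 2 + ∑ i, ‖p.2 i‖ ^ 2) ≤ directSumInner (primalDualOp A B L p) p := by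
  set S := ∑ i, ‖R' i ∘L L i ∘L R‖ ^ 2
  set C := 1 + ‖R‖ ^ 2 + ∑ i, ‖R' i‖ ^ 2
  have hS : √S < 1 := (Real.sqrt_lt' one_pos).2 (by rwa [one_pow])
  have hC : 0 < C := by positivity
  refine ⟨(1 - √S) / C, div_pos (sub_pos.2 hS) hC, ?_⟩
  rintro ⟨x, v⟩
  obtain ⟨a, rfl, ha⟩ := exists_apply_eq_and_inner_eq_norm_sq hR hRA x
  choose b hbv hb using fun i => exists_apply_eq_and_inner_eq_norm_sq (hR' i) (hR'B i) (v i)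
  have hcross : ∀ i, ⟪L i (R a), v i⟫ ≤ ‖R' i ∘L L i ∘L R‖ * ‖a‖ * ‖b i‖ := fun i => by
    rw [← hbv i]; exact inner_apply_le_norm_comp_mul (hR' i) (L i) a (b i)
  have hnorm : ‖R a‖ ^ 2 + ∑ i, ‖v i‖ ^ 2 ≤ C * (‖a‖ ^ 2 + ∑ i, ‖b i‖ ^ 2) :=
    sq_add_sum_sq_le_mul _ (norm_nonneg _) (R.le_opNorm a) (fun i _ => norm_nonneg _)
      (fun i _ => hbv i ▸ (R' i).le_opNorm (b i))
  rw [directSumInner_primalDualOp_self, ha, Finset.sum_congr rfl fun i _ => hb i]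
  calc (1 - √S) / C * (‖R a‖ ^ 2 + ∑ i, ‖v i‖ ^ 2)
      ≤ (1 - √S) / C * (C * (‖a‖ ^ 2 + ∑ i, ‖b i‖ ^ 2)) := by gcongr
    _ = (1 - √S) * (‖a‖ ^ 2 + ∑ i, ‖b i‖ ^ 2) := by field_simp
    _ ≤ _ := one_sub_sqrt_mul_le_of_le_mul _ _ _ _ _ fun i _ => hcross i

end Coercive

theorem statement8_general
    {H : Type*} [NormedAddCommGroup H] [InnerProductSpace ℝ H] [CompleteSpace H]
    {m : ℕ}
    {G : Fin m → Type*} [∀ i, NormedAddCommGroup (G i)] [∀ i, InnerProductSpace ℝ (G i)]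
    [∀ i, CompleteSpace (G i)]
    (U : H →L[ℝ] H)
    (hUsa : ∀ x y : H, ⟪U x, y⟫ = ⟪x, U y⟫)
    (Ui : ∀ i, G i →L[ℝ] G i)
    (hUisa : ∀ i, ∀ x y : G i, ⟪Ui i x, y⟫ = ⟪x, Ui i y⟫)
    (L : ∀ i, H →L[ℝ] G i)
    -- inverses
    (Uinv : H →L[ℝ] H)
    (hUinv1 : U.comp Uinv = ContinuousLinearMap.id ℝ H)
    (Uiinv : ∀ i, G i →L[ℝ] G i)
    (hUiinv1 : ∀ i, (Ui i).comp (Uiinv i) = ContinuousLinearMap.id ℝ (G i))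
    -- square roots
    (RU : H →L[ℝ] H)
    (hRUsa : ∀ x y : H, ⟪RU x, y⟫ = ⟪x, RU y⟫)
    (hRUsq : RU.comp RU = U)
    (RUi : ∀ i, G i →L[ℝ] G i)
    (hRUisa : ∀ i, ∀ x y : G i, ⟪RUi i x, y⟫ = ⟪x, RUi i y⟫)
    (hRUisq : ∀ i, (RUi i).comp (RUi i) = Ui i)
    -- Σᵢ ‖Uᵢ^{1/2} Lᵢ U^{1/2}‖² < 1
    (hsum : ∑ i, ‖(RUi i).comp ((L i).comp RU)‖ ^ 2 < 1)
    -- the operator W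
    (W : (H × ∀ i, G i) → (H × ∀ i, G i))
    (hW : ∀ p : H × ∀ i, G i,
      W p = (Uinv p.1 - ∑ i, ContinuousLinearMap.adjoint (L i) (p.2 i),
             fun i => -(L i p.1) + Uiinv i (p.2 i))) :
    -- W is self-adjoint for the direct-sum scalar product …
    ((∀ p q : H × ∀ i, G i,
        ⟪(W p).1, q.1⟫ + ∑ i, ⟪(W p).2 i, q.2 i⟫
          = ⟪p.1, (W q).1⟫ + ∑ i, ⟪p.2 i, (W q).2 i⟫)) ∧
    -- … and W ⪰ ρ Id for some ρ > 0
    (∃ ρ : ℝ, 0 < ρ ∧ ∀ p : H × ∀ i, G i,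
      ρ * (‖p.1‖ ^ 2 + ∑ i, ‖p.2 i‖ ^ 2) ≤ ⟪(W p).1, p.1⟫ + ∑ i, ⟪(W p).2 i, p.2 i⟫) := by
  obtain rfl : W = primalDualOp Uinv Uiinv L := funext hW
  have hUinv : (Uinv : H →ₗ[ℝ] H).IsSymmetric := .of_comp_eq_id hUsa hUinv1
  have hUiinv : ∀ i, (Uiinv i : G i →ₗ[ℝ] G i).IsSymmetric :=
    fun i => .of_comp_eq_id (hUisa i) (hUiinv1 i)
  have hRUinv : (RU ∘L RU) ∘L Uinv = ContinuousLinearMap.id ℝ H := by rwa [hRUsq]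
  have hRUiinv : ∀ i, (RUi i ∘L RUi i) ∘L Uiinv i = ContinuousLinearMap.id ℝ (G i) :=
    fun i => by rw [hRUisq]; exact hUiinv1 i
  exact ⟨directSumInner_primalDualOp_comm L hUinv hUiinv,
    exists_pos_mul_le_directSumInner_primalDualOp hRUsa hRUinv hRUisa hRUiinv L hsum⟩

/-- With `U ⪰ αId` on `ℋ`, `Uᵢ ⪰ αId` on `𝒢ᵢ` (square roots `RU`, `RUi`,
inverses `Uinv`, `Uiinv`) and `Σᵢ ‖Uᵢ^{1/2} Lᵢ U^{1/2}‖² < 1`, the operator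
`W(x,v) = (U⁻¹x − Σᵢ Lᵢ* vᵢ, (−Lᵢ x + Uᵢ⁻¹ vᵢ)ᵢ)` on `𝒦 = ℋ ⊕ 𝒢₁ ⊕ ⋯ ⊕ 𝒢ₘ` is self-adjoint
and `⪰ ρ Id` for some `ρ > 0`. -/
theorem statement8
    {H : Type*} [NormedAddCommGroup H] [InnerProductSpace ℝ H] [CompleteSpace H]
    {m : ℕ} (hm : 0 < m)
    {G : Fin m → Type*} [∀ i, NormedAddCommGroup (G i)] [∀ i, InnerProductSpace ℝ (G i)]
    [∀ i, CompleteSpace (G i)]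
    (α : ℝ) (hα : 0 < α)
    (U : H →L[ℝ] H)
    (hUsa : ∀ x y : H, ⟪U x, y⟫ = ⟪x, U y⟫)
    (hUα : ∀ x : H, α * ‖x‖ ^ 2 ≤ ⟪U x, x⟫)
    (Ui : ∀ i, G i →L[ℝ] G i)
    (hUisa : ∀ i, ∀ x y : G i, ⟪Ui i x, y⟫ = ⟪x, Ui i y⟫)
    (hUiα : ∀ i, ∀ x : G i, α * ‖x‖ ^ 2 ≤ ⟪Ui i x, x⟫)
    (L : ∀ i, H →L[ℝ] G i)
    -- inverses
    (Uinv : H →L[ℝ] H)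
    (hUinv1 : U.comp Uinv = ContinuousLinearMap.id ℝ H)
    (hUinv2 : Uinv.comp U = ContinuousLinearMap.id ℝ H)
    (Uiinv : ∀ i, G i →L[ℝ] G i)
    (hUiinv1 : ∀ i, (Ui i).comp (Uiinv i) = ContinuousLinearMap.id ℝ (G i))
    (hUiinv2 : ∀ i, (Uiinv i).comp (Ui i) = ContinuousLinearMap.id ℝ (G i))
    -- square roots
    (RU : H →L[ℝ] H)
    (hRUsa : ∀ x y : H, ⟪RU x, y⟫ = ⟪x, RU y⟫)
    (hRUpos : ∀ x : H, 0 ≤ ⟪RU x, x⟫)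
    (hRUsq : RU.comp RU = U)
    (RUi : ∀ i, G i →L[ℝ] G i)
    (hRUisa : ∀ i, ∀ x y : G i, ⟪RUi i x, y⟫ = ⟪x, RUi i y⟫)
    (hRUipos : ∀ i, ∀ x : G i, 0 ≤ ⟪RUi i x, x⟫)
    (hRUisq : ∀ i, (RUi i).comp (RUi i) = Ui i)
    -- Σᵢ ‖Uᵢ^{1/2} Lᵢ U^{1/2}‖² < 1
    (hsum : ∑ i, ‖(RUi i).comp ((L i).comp RU)‖ ^ 2 < 1)
    -- the operator W
    (W : (H × ∀ i, G i) → (H × ∀ i, G i))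
    (hW : ∀ p : H × ∀ i, G i,
      W p = (Uinv p.1 - ∑ i, ContinuousLinearMap.adjoint (L i) (p.2 i),
             fun i => -(L i p.1) + Uiinv i (p.2 i))) :
    -- W is self-adjoint for the direct-sum scalar product …
    ((∀ p q : H × ∀ i, G i,
        ⟪(W p).1, q.1⟫ + ∑ i, ⟪(W p).2 i, q.2 i⟫
          = ⟪p.1, (W q).1⟫ + ∑ i, ⟪p.2 i, (W q).2 i⟫)) ∧
    -- … and W ⪰ ρ Id for some ρ > 0
    (∃ ρ : ℝ, 0 < ρ ∧ ∀ p : H × ∀ i, G i,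
      ρ * (‖p.1‖ ^ 2 + ∑ i, ‖p.2 i‖ ^ 2) ≤ ⟪(W p).1, p.1⟫ + ∑ i, ⟪(W p).2 i, p.2 i⟫) :=
  statement8_general U hUsa Ui hUisa L Uinv hUinv1 Uiinv hUiinv1 RU hRUsa hRUsq RUi hRUisa hRUisq
    hsum W hW
end

section
/- Let ℋ and 𝒢_1,…,𝒢_m be real Hilbert spaces, let α > 0, let U be a bounded self-adjoint operator on ℋ with U ⪰ αId, for every i ∈ {1,…,m} let U_i be a bounded self-adjoint operator on 𝒢_i with U_i ⪰ αId, and let L_i : ℋ → 𝒢_i be bounded linear operators. Let 𝒢 = 𝒢_1 ⊕ ⋯ ⊕ 𝒢_m, let Ũ : 𝒢 → 𝒢 be defined by Ũ(v_1,…,v_m) = (U_1 v_1,…,U_m v_m), and let L : ℋ → 𝒢 be defined by Lx = (L_1 x,…,L_m x). If ζ = 1 − Σ_{i=1}^m ‖U_i^{1/2} L_i U^{1/2}‖² > 0, then the bounded self-adjoint operator Ũ^{-1} − L U L^* on 𝒢 is strongly positive: there exists ρ > 0 such that ⟨(Ũ^{-1} − L U L^*)v, v⟩ ≥ ρ‖v‖²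 for all v ∈ 𝒢. Consequently, the operator on 𝒦 = ℋ ⊕ 𝒢 defined by (x,v) ↦ ( U^{-1}x, (Ũ^{-1} − L U L^*)v ) is self-adjoint and ⪰ ρ'Id for some ρ' > 0. -/
open scoped RealInnerProductSpace

section Aux

variable {E : Type*} [NormedAddCommGroup E] [InnerProductSpace ℝ E]

lemma aux_inv_symm (A Ainv : E →L[ℝ] E) (h1 : ∀ y, A (Ainv y) = y)
    (hsa : ∀ x y, ⟪A x, y⟫ = ⟪x, A y⟫) (x y : E) :
    ⟪Ainv x, y⟫ = ⟪x, Ainv y⟫ := by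
  calc ⟪Ainv x, y⟫ = ⟪Ainv x, A (Ainv y)⟫ := by rw [h1]
    _ = ⟪A (Ainv x), Ainv y⟫ := (hsa _ _).symm
    _ = ⟪x, Ainv y⟫ := by rw [h1]

lemma aux_inv_bound (α : ℝ) (hα : 0 < α) (A Ainv : E →L[ℝ] E)
    (h1 : ∀ y, A (Ainv y) = y)
    (hpos : ∀ x, α * ‖x‖ ^ 2 ≤ ⟪A x, x⟫) (x : E) :
    α / (‖A‖ + 1) ^ 2 * ‖x‖ ^ 2 ≤ ⟪Ainv x, x⟫ := by
  have hx : A (Ainv x) = x := h1 x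
  have h2 : ⟪Ainv x, x⟫ = ⟪A (Ainv x), Ainv x⟫ := by
    nth_rewrite 2 [← hx]
    exact real_inner_comm _ _
  have h3 := hpos (Ainv x)
  have h4 : ‖x‖ ≤ (‖A‖ + 1) * ‖Ainv x‖ := by
    calc ‖x‖ = ‖A (Ainv x)‖ := by rw [hx]
      _ ≤ ‖A‖ * ‖Ainv x‖ := A.le_opNorm _
      _ ≤ (‖A‖ + 1) * ‖Ainv x‖ := by nlinarith [norm_nonneg (Ainv x)]
  have hA : (0:ℝ) ≤ ‖A‖ := norm_nonneg _
  rw [h2, div_mul_eq_mul_div, div_le_iff₀ (by positivity)]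
  nlinarith [norm_nonneg x, norm_nonneg (Ainv x),
    mul_le_mul h4 h4 (norm_nonneg x) (by positivity)]

end Aux

/-- With `U ⪰ αId` on `ℋ` and `Uᵢ ⪰ αId` on `𝒢ᵢ` (square roots `RU`, `RUi`,
inverses `Uinv`, `Uiinv`), if `ζ = 1 − Σᵢ ‖Uᵢ^{1/2} Lᵢ U^{1/2}‖² > 0` then the operator
`Ũ⁻¹ − L U L*` on `𝒢 = 𝒢₁ ⊕ ⋯ ⊕ 𝒢ₘ`, given componentwise by
`(M v)ᵢ = Uᵢ⁻¹ vᵢ − Lᵢ (U (Σⱼ Lⱼ* vⱼ))`, is self-adjoint and strongly positive, and the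
diagonal operator `(x, v) ↦ (U⁻¹ x, M v)` on `𝒦 = ℋ ⊕ 𝒢` is self-adjoint and `⪰ ρ' Id`
for some `ρ' > 0`. -/
theorem statement9
    {H : Type*} [NormedAddCommGroup H] [InnerProductSpace ℝ H] [CompleteSpace H]
    {m : ℕ} (hm : 0 < m)
    {G : Fin m → Type*} [∀ i, NormedAddCommGroup (G i)] [∀ i, InnerProductSpace ℝ (G i)]
    [∀ i, CompleteSpace (G i)]
    (α : ℝ) (hα : 0 < α)
    (U : H →L[ℝ] H)
    (hUsa : ∀ x y : H, ⟪U x, y⟫ = ⟪x, U y⟫)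
    (hUα : ∀ x : H, α * ‖x‖ ^ 2 ≤ ⟪U x, x⟫)
    (Ui : ∀ i, G i →L[ℝ] G i)
    (hUisa : ∀ i, ∀ x y : G i, ⟪Ui i x, y⟫ = ⟪x, Ui i y⟫)
    (hUiα : ∀ i, ∀ x : G i, α * ‖x‖ ^ 2 ≤ ⟪Ui i x, x⟫)
    (L : ∀ i, H →L[ℝ] G i)
    -- inverses
    (Uinv : H →L[ℝ] H)
    (hUinv1 : U.comp Uinv = ContinuousLinearMap.id ℝ H)
    (hUinv2 : Uinv.comp U = ContinuousLinearMap.id ℝ H)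
    (Uiinv : ∀ i, G i →L[ℝ] G i)
    (hUiinv1 : ∀ i, (Ui i).comp (Uiinv i) = ContinuousLinearMap.id ℝ (G i))
    (hUiinv2 : ∀ i, (Uiinv i).comp (Ui i) = ContinuousLinearMap.id ℝ (G i))
    -- square roots
    (RU : H →L[ℝ] H)
    (hRUsa : ∀ x y : H, ⟪RU x, y⟫ = ⟪x, RU y⟫)
    (hRUpos : ∀ x : H, 0 ≤ ⟪RU x, x⟫)
    (hRUsq : RU.comp RU = U)
    (RUi : ∀ i, G i →L[ℝ] G i)
    (hRUisa : ∀ i, ∀ x y : G i, ⟪RUi i x, y⟫ = ⟪x, RUi i y⟫)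
    (hRUipos : ∀ i, ∀ x : G i, 0 ≤ ⟪RUi i x, x⟫)
    (hRUisq : ∀ i, (RUi i).comp (RUi i) = Ui i)
    -- ζ = 1 − Σᵢ ‖Uᵢ^{1/2} Lᵢ U^{1/2}‖² > 0
    (hζ : 0 < 1 - ∑ i, ‖(RUi i).comp ((L i).comp RU)‖ ^ 2)
    -- the operator M = Ũ⁻¹ − L U L* on 𝒢
    (M : (∀ i, G i) → ∀ i, G i)
    (hM : ∀ v : ∀ i, G i, M v = fun i =>
      Uiinv i (v i) - L i (U (∑ j, ContinuousLinearMap.adjoint (L j) (v j)))) :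
    -- M is self-adjoint …
    ((∀ v w : ∀ i, G i, ∑ i, ⟪M v i, w i⟫ = ∑ i, ⟪v i, M w i⟫)) ∧
    -- … and strongly positive
    (∃ ρ : ℝ, 0 < ρ ∧ ∀ v : ∀ i, G i, ρ * ∑ i, ‖v i‖ ^ 2 ≤ ∑ i, ⟪M v i, v i⟫) ∧
    -- the diagonal operator (x, v) ↦ (U⁻¹x, M v) on 𝒦 is self-adjoint …
    ((∀ x y : H, ∀ v w : ∀ i, G i,
        ⟪Uinv x, y⟫ + ∑ i, ⟪M v i, w i⟫ = ⟪x, Uinv y⟫ + ∑ i, ⟪v i, M w i⟫)) ∧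
    -- … and ⪰ ρ' Id for some ρ' > 0
    (∃ ρ' : ℝ, 0 < ρ' ∧ ∀ x : H, ∀ v : ∀ i, G i,
      ρ' * (‖x‖ ^ 2 + ∑ i, ‖v i‖ ^ 2) ≤ ⟪Uinv x, x⟫ + ∑ i, ⟪M v i, v i⟫) := by
  classical
  haveI : Nonempty (Fin m) := Fin.pos_iff_nonempty.mp hm
  -- pointwise inverse equations
  have hU1 : ∀ y : H, U (Uinv y) = y := fun y => by
    have := ContinuousLinearMap.ext_iff.mp hUinv1 y
    simpa using this
  have hUi1 : ∀ i, ∀ y : G i, Ui i (Uiinv i y) = y := fun i y => by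
    have := ContinuousLinearMap.ext_iff.mp (hUiinv1 i) y
    simpa using this
  have hRUsq' : ∀ x : H, RU (RU x) = U x := fun x => by
    have := ContinuousLinearMap.ext_iff.mp hRUsq x
    simpa using this
  have hRUisq' : ∀ i, ∀ x : G i, RUi i (RUi i x) = Ui i x := fun i x => by
    have := ContinuousLinearMap.ext_iff.mp (hRUisq i) x
    simpa using this
  -- self-adjointness of square roots at the operator level
  have hRUadj : ContinuousLinearMap.adjoint RU = RU :=
    (ContinuousLinearMap.isSelfAdjoint_iff_isSymmetric.mpr (fun x y => hRUsa x y)).adjoint_eq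
  have hRUiadj : ∀ i, ContinuousLinearMap.adjoint (RUi i) = RUi i := fun i =>
    (ContinuousLinearMap.isSelfAdjoint_iff_isSymmetric.mpr (fun x y => hRUisa i x y)).adjoint_eq
  -- symmetry of the inverses
  have hUinvsym : ∀ x y : H, ⟪Uinv x, y⟫ = ⟪x, Uinv y⟫ := aux_inv_symm U Uinv hU1 hUsa
  have hUiinvsym : ∀ i, ∀ x y : G i, ⟪Uiinv i x, y⟫ = ⟪x, Uiinv i y⟫ := fun i =>
    aux_inv_symm (Ui i) (Uiinv i) (hUi1 i) (hUisa i)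
  -- the map s
  set s : (∀ i, G i) → H := fun v => ∑ j, ContinuousLinearMap.adjoint (L j) (v j) with hs
  -- bilinear identity
  have hbil : ∀ v w : ∀ i, G i,
      ∑ i, ⟪M v i, w i⟫ = (∑ i, ⟪Uiinv i (v i), w i⟫) - ⟪U (s v), s w⟫ := by
    intro v w
    have h1 : ∀ i, ⟪M v i, w i⟫
        = ⟪Uiinv i (v i), w i⟫ - ⟪U (s v), ContinuousLinearMap.adjoint (L i) (w i)⟫ := by
      intro i
      rw [hM]
      rw [inner_sub_left, ContinuousLinearMap.adjoint_inner_right]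
    rw [Finset.sum_congr rfl (fun i _ => h1 i), Finset.sum_sub_distrib]
    congr 1
    rw [← inner_sum]
  -- Part 1: symmetry of M
  have hMsym : ∀ v w : ∀ i, G i, ∑ i, ⟪M v i, w i⟫ = ∑ i, ⟪v i, M w i⟫ := by
    intro v w
    have h2 : ∑ i, ⟪v i, M w i⟫ = ∑ i, ⟪M w i, v i⟫ :=
      Finset.sum_congr rfl (fun i _ => real_inner_comm _ _)
    rw [h2, hbil v w, hbil w v]
    congr 1
    · exact Finset.sum_congr rfl fun i _ => by
        rw [hUiinvsym i, real_inner_comm]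
    · rw [hUsa, real_inner_comm]
  -- positivity bound for inverses
  have hUinvpos : ∀ x : H, α / (‖U‖ + 1) ^ 2 * ‖x‖ ^ 2 ≤ ⟪Uinv x, x⟫ :=
    aux_inv_bound α hα U Uinv hU1 hUα
  have hUiinvpos : ∀ i, ∀ x : G i, α / (‖Ui i‖ + 1) ^ 2 * ‖x‖ ^ 2 ≤ ⟪Uiinv i (x), x⟫ :=
    fun i => aux_inv_bound α hα (Ui i) (Uiinv i) (hUi1 i) (hUiα i)
  -- constants
  set σ : ℝ := ∑ i, ‖(RUi i).comp ((L i).comp RU)‖ ^ 2 with hσ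
  set B : ℝ := ∑ i, (‖Ui i‖ + 1) ^ 2 with hB
  have hBpos : 0 < B :=
    Finset.sum_pos (fun i _ => by positivity) Finset.univ_nonempty
  have hBle : ∀ i, (‖Ui i‖ + 1) ^ 2 ≤ B := fun i =>
    Finset.single_le_sum (f := fun i => (‖Ui i‖ + 1) ^ 2) (fun j _ => by positivity)
      (Finset.mem_univ i)
  have hcle : ∀ i, α / B ≤ α / (‖Ui i‖ + 1) ^ 2 := fun i =>
    div_le_div_of_nonneg_left hα.le (by positivity) (hBle i)
  -- the main quadratic estimate
  have hmain : ∀ v : ∀ i, G i,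
      (1 - σ) * (α / B) * ∑ i, ‖v i‖ ^ 2 ≤ ∑ i, ⟪M v i, v i⟫ := by
    intro v
    set w : ∀ i, G i := fun i => Uiinv i (v i) with hw
    set a : Fin m → ℝ := fun i => ‖RUi i (w i)‖ with ha
    have hvi : ∀ i, v i = RUi i (RUi i (w i)) := fun i => by
      rw [hRUisq' i, hw, hUi1 i]
    -- ⟪Uiinv vᵢ, vᵢ⟫ = aᵢ²
    have hai : ∀ i, ⟪Uiinv i (v i), v i⟫ = a i ^ 2 := by
      intro i
      calc ⟪Uiinv i (v i), v i⟫ = ⟪w i, RUi i (RUi i (w i))⟫ := by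
            rw [← hvi i]
        _ = ⟪RUi i (w i), RUi i (w i)⟫ := (hRUisa i (w i) (RUi i (w i))).symm
        _ = a i ^ 2 := real_inner_self_eq_norm_sq _
    have hS : ∑ i, ⟪Uiinv i (v i), v i⟫ = ∑ i, a i ^ 2 :=
      Finset.sum_congr rfl fun i _ => hai i
    -- ⟪U s, s⟫ = ‖RU s‖²
    have hUss : ⟪U (s v), s v⟫ = ‖RU (s v)‖ ^ 2 := by
      rw [← hRUsq' (s v), hRUsa, real_inner_self_eq_norm_sq]
    -- per-term bound
    have hbnd : ∀ i, ‖RU (ContinuousLinearMap.adjoint (L i) (v i))‖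
        ≤ ‖(RUi i).comp ((L i).comp RU)‖ * a i := by
      intro i
      have he : RU (ContinuousLinearMap.adjoint (L i) (v i))
          = ContinuousLinearMap.adjoint ((RUi i).comp ((L i).comp RU)) (RUi i (w i)) := by
        rw [ContinuousLinearMap.adjoint_comp, ContinuousLinearMap.adjoint_comp,
          hRUadj, hRUiadj i]
        simp only [ContinuousLinearMap.comp_apply]
        rw [← hvi i]
      rw [he]
      calc ‖ContinuousLinearMap.adjoint ((RUi i).comp ((L i).comp RU)) (RUi i (w i))‖
          ≤ ‖ContinuousLinearMap.adjoint ((RUi i).comp ((L i).comp RU))‖ * ‖RUi i (w i)‖ :=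
            ContinuousLinearMap.le_opNorm _ _
        _ = ‖(RUi i).comp ((L i).comp RU)‖ * a i := by
            rw [LinearIsometryEquiv.norm_map ContinuousLinearMap.adjoint]
    -- sum bound
    have hsum : ‖RU (s v)‖ ≤ ∑ i, ‖(RUi i).comp ((L i).comp RU)‖ * a i := by
      have : RU (s v) = ∑ i, RU (ContinuousLinearMap.adjoint (L i) (v i)) := by
        rw [hs]; exact map_sum RU _ _
      rw [this]
      exact (norm_sum_le _ _).trans (Finset.sum_le_sum fun i _ => hbnd i)
    have hCS : (∑ i, ‖(RUi i).comp ((L i).comp RU)‖ * a i) ^ 2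
        ≤ σ * ∑ i, a i ^ 2 := by
      rw [hσ]
      exact Finset.sum_mul_sq_le_sq_mul_sq _ _ _
    have hRUs2 : ‖RU (s v)‖ ^ 2 ≤ σ * ∑ i, a i ^ 2 := by
      refine le_trans ?_ hCS
      exact pow_le_pow_left₀ (norm_nonneg _) hsum 2
    -- lower bound on S
    have hSlb : (α / B) * ∑ i, ‖v i‖ ^ 2 ≤ ∑ i, a i ^ 2 := by
      rw [Finset.mul_sum]
      rw [← hS]
      refine Finset.sum_le_sum fun i _ => ?_
      calc α / B * ‖v i‖ ^ 2 ≤ α / (‖Ui i‖ + 1) ^ 2 * ‖v i‖ ^ 2 :=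
            mul_le_mul_of_nonneg_right (hcle i) (by positivity)
        _ ≤ ⟪Uiinv i (v i), v i⟫ := hUiinvpos i (v i)
    have hSnn : 0 ≤ ∑ i, a i ^ 2 := Finset.sum_nonneg fun i _ => sq_nonneg _
    have hζ' : 0 < 1 - σ := hζ
    calc (1 - σ) * (α / B) * ∑ i, ‖v i‖ ^ 2
        ≤ (1 - σ) * ∑ i, a i ^ 2 := by
          rw [mul_assoc]
          exact mul_le_mul_of_nonneg_left hSlb hζ'.le
      _ ≤ (∑ i, a i ^ 2) - σ * ∑ i, a i ^ 2 := by ring_nf; rfl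
      _ ≤ (∑ i, a i ^ 2) - ‖RU (s v)‖ ^ 2 := by linarith [hRUs2]
      _ = ∑ i, ⟪M v i, v i⟫ := by rw [hbil v v, hS, hUss]
  -- assemble
  set ρ : ℝ := (1 - σ) * (α / B) with hρ
  have hρpos : 0 < ρ := mul_pos hζ (div_pos hα hBpos)
  set ρ' : ℝ := min ρ (α / (‖U‖ + 1) ^ 2) with hρ'
  have hρ'pos : 0 < ρ' := lt_min hρpos (by positivity)
  refine ⟨hMsym, ⟨ρ, hρpos, hmain⟩, ?_, ⟨ρ', hρ'pos, ?_⟩⟩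
  · intro x y v w
    rw [hMsym v w, hUinvsym x y]
  · intro x v
    have h1 : ρ' * ‖x‖ ^ 2 ≤ ⟪Uinv x, x⟫ := by
      refine le_trans ?_ (hUinvpos x)
      exact mul_le_mul_of_nonneg_right (min_le_right _ _) (by positivity)
    have h2 : ρ' * ∑ i, ‖v i‖ ^ 2 ≤ ∑ i, ⟪M v i, v i⟫ := by
      refine le_trans ?_ (hmain v)
      exact mul_le_mul_of_nonneg_right (min_le_left _ _)
        (Finset.sum_nonneg fun i _ => by positivity)
    calc ρ' * (‖x‖ ^ 2 + ∑ i, ‖v i‖ ^ 2) = ρ' * ‖x‖ ^ 2 + ρ' * ∑ i, ‖v i‖ ^ 2 := by ring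
      _ ≤ ⟪Uinv x, x⟫ + ∑ i, ⟪M v i, v i⟫ := add_le_add h1 h2
end
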